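/- arXiv:1711.05035 — 15 statements merged into one kernel-verified Lean document; each statement's English description precedes it below -/
import Mathlib

section
/- Define h : ℕ → ℕ by h(0) = h(1) = 0 and h(z) = 2^(⌊log₂ z⌋ − 1) for z ≥ 2. Then h satisfies condition (a): for all z, z' ∈ ℕ and every integer i ≥ 1, if ⌊z/2^i⌋ = ⌊z'/2^i⌋ then ⌊h(z)/2^(i-1)⌋ = ⌊h(z')/2^(i-1)⌋. -/
/-- Condition (a): if `⌊z/2^i⌋ = ⌊z'/2^i⌋` for some `i ≥ 1`,
then `⌊h(z)/2^(i-1)⌋ = ⌊h(z')/2^(i-1)⌋`. -/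
def CondA (h : ℕ → ℕ) : Prop :=
  ∀ z z' i : ℕ, 1 ≤ i → z / 2 ^ i = z' / 2 ^ i →
    h z / 2 ^ (i - 1) = h z' / 2 ^ (i - 1)

/-! Since `log₂ 0 = log₂ 1 = 0`, `h z = ⌊2^⌊log₂ z⌋ / 2⌋` for every `z`, and for `i ≥ 1` the quotient `⌊2^⌊log₂ z⌋ / 2^i⌋` is `0` when
`z < 2^i` and `2^⌊log₂ ⌊z / 2^i⌋⌋` otherwise, hence a function of `⌊z / 2^i⌋`. -/

namespace Nat

variable {b : ℕ}

theorem pow_log_div_pow (hb : 1 < b) (z i : ℕ) :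
    b ^ log b z / b ^ i = if i ≤ log b z then b ^ log b (z / b ^ i) else 0 := by
  split_ifs with hi
  · rw [log_div_base_pow, Nat.pow_div hi (by omega)]
  · exact Nat.div_eq_of_lt (Nat.pow_lt_pow_right hb (by omega))

theorem le_log_iff_div_pow_ne_zero (hb : 1 < b) {i : ℕ} (hi : i ≠ 0) (z : ℕ) :
    i ≤ log b z ↔ z / b ^ i ≠ 0 := by
  rw [Ne, Nat.div_eq_zero_iff_lt (Nat.pow_pos (by omega)), not_lt]
  rcases eq_or_ne z 0 with rfl | hz
  · simp [hi, Nat.ne_zero_of_lt hb]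
  · exact le_log_iff_pow_le hb hz

theorem pow_log_div_pow_of_ne_zero (hb : 1 < b) {i : ℕ} (hi : i ≠ 0) (z : ℕ) :
    b ^ log b z / b ^ i = if z / b ^ i = 0 then 0 else b ^ log b (z / b ^ i) := by
  simp only [pow_log_div_pow hb, le_log_iff_div_pow_ne_zero hb hi, ite_not]

end Nat

theorem condA_pow_log_div_two : CondA fun z => 2 ^ Nat.log 2 z / 2 := by
  intro z z' i hi hzz'
  have hdiv : ∀ y, 2 ^ Nat.log 2 y / 2 / 2 ^ (i - 1) = 2 ^ Nat.log 2 y / 2 ^ i := fun y => by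
    rw [Nat.div_div_eq_div_mul, ← pow_succ', Nat.sub_add_cancel hi]
  simp only [hdiv, Nat.pow_log_div_pow_of_ne_zero one_lt_two (by omega : i ≠ 0), hzz']

theorem stmt_1 (h : ℕ → ℕ) (h0 : h 0 = 0) (h1 : h 1 = 0)
    (hge2 : ∀ z, 2 ≤ z → h z = 2 ^ (Nat.log 2 z - 1)) :
    CondA h := by
  obtain rfl : h = fun z => 2 ^ Nat.log 2 z / 2 := by
    funext z
    rcases lt_or_ge z 2 with hz | hz
    · interval_cases z <;> simp [h0, h1]
    · have hlog : 1 ≤ Nat.log 2 z := Nat.le_log_of_pow_le one_lt_two hz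
      rw [hge2 z hz, ← Nat.pow_div hlog two_pos, pow_one]
  exact condA_pow_log_div_two
end

section
/- Let h : ℕ → ℕ satisfy condition (a). If y, z ∈ ℕ satisfy h(z) ≥ y, then for every integer i ≥ 1 we have h(2^i · ⌊z/2^i⌋) ≥ 2^(i-1) · ⌊y/2^(i-1)⌋ (equivalently, if h(Σ_{k=0}^n z_k 2^k) ≥ Σ_{k=0}^n y_k 2^k for binary digits z_k, y_k, then h(Σ_{k=i}^n z_k 2^k) ≥ Σ_{k=i-1}^n y_k 2^k). -/
theorem CondA.apply_mul_div_pow_div {h : ℕ → ℕ} (hA : CondA h) (z : ℕ) {i : ℕ} (hi : 1 ≤ i) :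
    h (2 ^ i * (z / 2 ^ i)) / 2 ^ (i - 1) = h z / 2 ^ (i - 1) :=
  hA _ _ i hi (Nat.mul_div_cancel_left _ (Nat.two_pow_pos i))

theorem stmt_2 (h : ℕ → ℕ) (hA : CondA h) (y z : ℕ) (hyz : y ≤ h z)
    (i : ℕ) (hi : 1 ≤ i) :
    2 ^ (i - 1) * (y / 2 ^ (i - 1)) ≤ h (2 ^ i * (z / 2 ^ i)) :=
  calc 2 ^ (i - 1) * (y / 2 ^ (i - 1))
      ≤ 2 ^ (i - 1) * (h z / 2 ^ (i - 1)) := by gcongr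
    _ = 2 ^ (i - 1) * (h (2 ^ i * (z / 2 ^ i)) / 2 ^ (i - 1)) := by
        rw [hA.apply_mul_div_pow_div z hi]
    _ ≤ h (2 ^ i * (z / 2 ^ i)) := Nat.mul_div_le _ _
end

section
/- Let h : ℕ → ℕ satisfy condition (a), let i ≥ 1 be an integer, let p ∈ ℕ, and let q ∈ ℕ be a multiple of 2^(i-1). If h(2^i · ⌊p/2^i⌋) < q, then h(p) < q (equivalently, if h(Σ_{k=i}^n p_k 2^k) < Σ_{k=i-1}^n q_k 2^k for binary digits p_k, q_k, then h(Σ_{k=0}^n p_k 2^k) < Σ_{k=i-1}^n q_k 2^k). -/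
theorem Nat.lt_of_div_eq_of_lt_of_dvd {a b d q : ℕ} (hd : d ∣ q) (hab : a / d = b / d)
    (ha : a < q) : b < q :=
  Nat.lt_of_div_lt_div (hab ▸ Nat.div_lt_div_of_lt_of_dvd hd ha)

theorem stmt_3 (h : ℕ → ℕ) (hA : CondA h) (i : ℕ) (hi : 1 ≤ i) (p q : ℕ)
    (hq : 2 ^ (i - 1) ∣ q) (hlt : h (2 ^ i * (p / 2 ^ i)) < q) :
    h p < q := by
  have htrunc : 2 ^ i * (p / 2 ^ i) / 2 ^ i = p / 2 ^ i :=
    Nat.mul_div_cancel_left _ (by positivity)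
  exact Nat.lt_of_div_eq_of_lt_of_dvd hq (hA _ _ i hi htrunc) hlt
end

section
/- Let h : ℕ → ℕ satisfy condition (a), let i ≥ 1 be an integer, let p ∈ ℕ, and let q ∈ ℕ be a multiple of 2^(i-1). If h(2^i · ⌊p/2^i⌋) < q + 2^(i-1), then h(2^(i-1) · ⌊p/2^(i-1)⌋) < q + 2^(i-1). -/
theorem Nat.mul_div_self_div_of_dvd {a b : ℕ} (p : ℕ) (ha : 0 < a) (hab : a ∣ b) :
    a * (p / a) / b = p / b := by
  obtain ⟨c, rfl⟩ := hab
  rw [Nat.mul_div_mul_left _ _ ha, Nat.div_div_eq_div_mul]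

theorem Nat.lt_add_of_div_eq_of_dvd {d q n m : ℕ} (hq : d ∣ q) (hnm : n / d = m / d)
    (hn : n < q + d) : m < q + d := by
  obtain ⟨k, rfl⟩ := hq
  rcases Nat.eq_zero_or_pos d with rfl | hd
  · simp at hn
  rw [← Nat.mul_succ, Nat.mul_comm, ← Nat.div_lt_iff_lt_mul hd] at hn ⊢
  exact hnm ▸ hn

theorem stmt_4 (h : ℕ → ℕ) (hA : CondA h) (i : ℕ) (hi : 1 ≤ i) (p q : ℕ)
    (hq : 2 ^ (i - 1) ∣ q) (hlt : h (2 ^ i * (p / 2 ^ i)) < q + 2 ^ (i - 1)) :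
    h (2 ^ (i - 1) * (p / 2 ^ (i - 1))) < q + 2 ^ (i - 1) := by
  have hdvd : 2 ^ (i - 1) ∣ 2 ^ i := Nat.pow_dvd_pow 2 (Nat.sub_le i 1)
  have hsame : 2 ^ i * (p / 2 ^ i) / 2 ^ i = 2 ^ (i - 1) * (p / 2 ^ (i - 1)) / 2 ^ i := by
    rw [Nat.mul_div_self_div_of_dvd p (by positivity) dvd_rfl,
      Nat.mul_div_self_div_of_dvd p (by positivity) hdvd]
  exact Nat.lt_add_of_div_eq_of_dvd hq (hA _ _ i hi hsame) hlt
end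

section
/- Let h : ℕ → ℕ be monotonically increasing and satisfy condition (a). Suppose x, y, z ∈ ℕ satisfy x ⊕ y ⊕ z ≠ 0 and y ≤ h(z). Then at least one of the following holds: (1) there exists u < x with u ⊕ y ⊕ z = 0; (2) there exists v < y with x ⊕ v ⊕ z = 0; (3) there exists w < z with x ⊕ y ⊕ w = 0 and y ≤ h(w); (4) there exist v < y and w' < z with x ⊕ v ⊕ w' = 0 and v = h(w'). -/
namespace Nat

theorem div_two_pow_eq_iff_testBit_eq {a b i : ℕ} :
    a / 2 ^ i = b / 2 ^ i ↔ ∀ j ≥ i, a.testBit j = b.testBit j := by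
  refine ⟨fun hab j hj => ?_, fun hab => eq_of_testBit_eq fun j => ?_⟩
  · simpa [testBit_div_two_pow, Nat.sub_add_cancel hj] using congrArg (testBit · (j - i)) hab
  · simpa [testBit_div_two_pow] using hab (j + i) (Nat.le_add_left i j)

theorem div_two_pow_succ_eq {a b i : ℕ} (hab : a / 2 ^ i = b / 2 ^ i) :
    a / 2 ^ (i + 1) = b / 2 ^ (i + 1) := by
  rw [pow_succ, ← Nat.div_div_eq_div_mul, ← Nat.div_div_eq_div_mul, hab]

theorem exists_div_two_pow_eq_and_lt_of_lt {a b : ℕ} (hab : a < b) :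
    ∃ k, a / 2 ^ (k + 1) = b / 2 ^ (k + 1) ∧ a / 2 ^ k < b / 2 ^ k := by
  have hex : ∃ i, a / 2 ^ i = b / 2 ^ i :=
    ⟨b, by rw [Nat.div_eq_of_lt (hab.trans b.lt_two_pow_self),
      Nat.div_eq_of_lt b.lt_two_pow_self]⟩
  obtain ⟨k, hk⟩ : ∃ k, Nat.find hex = k + 1 :=
    Nat.exists_eq_succ_of_ne_zero fun h0 => hab.ne (by simpa [h0] using Nat.find_spec hex)
  exact ⟨k, hk ▸ Nat.find_spec hex,
    (Nat.div_le_div_right hab.le).lt_of_ne (Nat.find_min hex (by omega))⟩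

/-- Each application of `T` fixes one more bit, so `T^[k + 1]` is constant. -/
theorem exists_isFixedPt_of_div_two_pow {T : ℕ → ℕ} (k : ℕ)
    (htop : ∀ a b, T a / 2 ^ k = T b / 2 ^ k)
    (hstep : ∀ i < k, ∀ a b, a / 2 ^ (i + 1) = b / 2 ^ (i + 1) → T a / 2 ^ i = T b / 2 ^ i) :
    ∃ a, Function.IsFixedPt T a := by
  have hiter : ∀ n ≤ k, ∀ a b, T^[n + 1] a / 2 ^ (k - n) = T^[n + 1] b / 2 ^ (k - n) := by
    intro n hn
    induction n with
    | zero => simpa using htop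
    | succ n ih =>
      intro a b
      rw [Function.iterate_succ_apply' T (n + 1), Function.iterate_succ_apply' T (n + 1)]
      refine hstep _ (by omega) _ _ ?_
      rw [show k - (n + 1) + 1 = k - n by omega]
      exact ih (by omega) a b
  refine ⟨T^[k + 1] 0, ?_⟩
  have := hiter k le_rfl (T 0) 0
  rw [Nat.sub_self, pow_zero, Nat.div_one, Nat.div_one, ← Function.iterate_succ_apply,
    Function.iterate_succ_apply'] at this
  exact this

end Nat

theorem CondA.div_two_pow_eq {h : ℕ → ℕ} (hA : CondA h) {a b i : ℕ}
    (hab : a / 2 ^ (i + 1) = b / 2 ^ (i + 1)) : h a / 2 ^ i = h b / 2 ^ i := by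
  simpa using hA a b (i + 1) (Nat.le_add_left 1 i) hab

def lowBitsUpdate (h : ℕ → ℕ) (x c k a : ℕ) : ℕ := 2 ^ k * c + (x ^^^ h a) % 2 ^ k

section lowBitsUpdate

variable (h : ℕ → ℕ) (x c k a : ℕ)

theorem lowBitsUpdate_div : lowBitsUpdate h x c k a / 2 ^ k = c := by
  rw [lowBitsUpdate, Nat.mul_add_div (by positivity),
    Nat.div_eq_of_lt (Nat.mod_lt _ (by positivity)), add_zero]

theorem lowBitsUpdate_mod : lowBitsUpdate h x c k a % 2 ^ k = (x ^^^ h a) % 2 ^ k := by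
  rw [lowBitsUpdate, Nat.mul_add_mod, Nat.mod_mod]

theorem testBit_lowBitsUpdate (j : ℕ) :
    (lowBitsUpdate h x c k a).testBit j =
      if j < k then x.testBit j ^^ (h a).testBit j else c.testBit (j - k) := by
  rw [lowBitsUpdate, Nat.testBit_two_pow_mul_add _ (Nat.mod_lt _ (by positivity))]
  split_ifs with hj <;> simp [hj, Nat.testBit_xor]

end lowBitsUpdate

theorem CondA.lowBitsUpdate_div_two_pow_eq {h : ℕ → ℕ} (hA : CondA h) (x c k : ℕ)
    {a b i : ℕ} (hab : a / 2 ^ (i + 1) = b / 2 ^ (i + 1)) :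
    lowBitsUpdate h x c k a / 2 ^ i = lowBitsUpdate h x c k b / 2 ^ i := by
  have hh := Nat.div_two_pow_eq_iff_testBit_eq.1 (hA.div_two_pow_eq hab)
  refine Nat.div_two_pow_eq_iff_testBit_eq.2 fun j hj => ?_
  simp only [testBit_lowBitsUpdate, hh j hj]

/-- Solving `x ⊕ w' = h w'` bit by bit from the top: condition (a) makes the bit of `h w'` at
position `j` depend only on the bits of `w'` above `j`. -/
theorem CondA.exists_xor_eq_apply {h : ℕ → ℕ} (hA : CondA h) {x w k : ℕ}
    (hk : (x ^^^ w) / 2 ^ k = h w / 2 ^ k) :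
    ∃ w', w' / 2 ^ k = w / 2 ^ k ∧ x ^^^ w' = h w' := by
  obtain ⟨w', hfix⟩ :=
    Nat.exists_isFixedPt_of_div_two_pow (T := lowBitsUpdate h x (w / 2 ^ k) k) k
    (fun a b => by rw [lowBitsUpdate_div, lowBitsUpdate_div])
    (fun i _ a b hab => hA.lowBitsUpdate_div_two_pow_eq x _ k hab)
  have hdiv : w' / 2 ^ k = w / 2 ^ k := by rw [← hfix, lowBitsUpdate_div]
  have hmod : w' % 2 ^ k = (x ^^^ h w') % 2 ^ k := by rw [← lowBitsUpdate_mod, hfix]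
  have hhigh : (x ^^^ w') / 2 ^ k = h w' / 2 ^ k := by
    rw [Nat.xor_div_two_pow, hdiv, ← Nat.xor_div_two_pow, hk,
      hA.div_two_pow_eq (Nat.div_two_pow_succ_eq hdiv)]
  have hlow : (x ^^^ w') % 2 ^ k = h w' % 2 ^ k := by
    rw [Nat.xor_mod_two_pow, hmod, Nat.xor_mod_two_pow, Nat.xor_xor_cancel_left]
  refine ⟨w', hdiv, ?_⟩
  rw [← Nat.div_add_mod (x ^^^ w') (2 ^ k), ← Nat.div_add_mod (h w') (2 ^ k), hhigh, hlow]

theorem CondA.xor_lt_of_apply_lt {h : ℕ → ℕ} (hA : CondA h) {x y w' : ℕ}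
    (hy : h (x ^^^ y) < y) (hw' : x ^^^ w' = h w') : x ^^^ w' < y := by
  set v := x ^^^ w'
  have hxv : x ^^^ v = w' := Nat.xor_xor_cancel_left x w'
  by_contra! hyv
  obtain rfl | hlt := hyv.eq_or_lt
  · rw [hxv, ← hw'] at hy
    exact hy.false
  obtain ⟨j, hj, hjlt⟩ := Nat.exists_div_two_pow_eq_and_lt_of_lt hlt
  have hagree : h (x ^^^ y) / 2 ^ j = v / 2 ^ j := by
    rw [hw', ← hxv]
    exact hA.div_two_pow_eq (by rw [Nat.xor_div_two_pow, hj, ← Nat.xor_div_two_pow])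
  have := Nat.div_le_div_right (c := 2 ^ j) hy.le
  omega

theorem stmt_5_general (h : ℕ → ℕ) (hA : CondA h)
    (x y z : ℕ) (hne : x ^^^ y ^^^ z ≠ 0) (hyz : y ≤ h z) :
    (∃ u < x, u ^^^ y ^^^ z = 0) ∨
    (∃ v < y, x ^^^ v ^^^ z = 0) ∨
    (∃ w < z, x ^^^ y ^^^ w = 0 ∧ y ≤ h w) ∨
    (∃ v < y, ∃ w' < z, x ^^^ v ^^^ w' = 0 ∧ v = h w') := by
  obtain hx | hy | hz := Nat.xor_trichotomy hne
  · exact Or.inl ⟨y ^^^ z, hx, by rw [Nat.xor_assoc, Nat.xor_self]⟩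
  · refine Or.inr (Or.inl ⟨z ^^^ x, hy, ?_⟩)
    rw [Nat.xor_comm z, Nat.xor_xor_cancel_left, Nat.xor_self]
  set w := x ^^^ y with hw
  by_cases hyw : y ≤ h w
  · exact Or.inr (Or.inr (Or.inl ⟨w, hz, Nat.xor_self w, hyw⟩))
  rw [not_le] at hyw
  obtain ⟨k, hk, hklt⟩ := Nat.exists_div_two_pow_eq_and_lt_of_lt hz
  have hyk : y / 2 ^ k = h w / 2 ^ k := by
    have := Nat.div_le_div_right (c := 2 ^ k) hyw.le
    have := Nat.div_le_div_right (c := 2 ^ k) hyz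
    have := hA.div_two_pow_eq hk
    omega
  obtain ⟨w', hw'k, hw'⟩ := hA.exists_xor_eq_apply (x := x) (w := w)
    (by rwa [hw, Nat.xor_xor_cancel_left])
  refine Or.inr (Or.inr (Or.inr ⟨x ^^^ w', hA.xor_lt_of_apply_lt hyw hw', w', ?_, ?_, hw'⟩))
  · exact Nat.lt_of_div_lt_div (hw'k ▸ hklt)
  · rw [Nat.xor_xor_cancel_left, Nat.xor_self]

theorem stmt_5 (h : ℕ → ℕ) (hmono : Monotone h) (hA : CondA h)
    (x y z : ℕ) (hne : x ^^^ y ^^^ z ≠ 0) (hyz : y ≤ h z) :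
    (∃ u < x, u ^^^ y ^^^ z = 0) ∨
    (∃ v < y, x ^^^ v ^^^ z = 0) ∨
    (∃ w < z, x ^^^ y ^^^ w = 0 ∧ y ≤ h w) ∨
    (∃ v < y, ∃ w' < z, x ^^^ v ^^^ w' = 0 ∧ v = h w') :=
  stmt_5_general h hA x y z hne hyz
end

section
/- Let h : ℕ → ℕ be monotonically increasing and satisfy condition (a). Suppose x, y, z ∈ ℕ satisfy x ⊕ y ⊕ z = 0 and y ≤ h(z). Then: (i) u ⊕ y ⊕ z ≠ 0 for every u < x; (ii) x ⊕ v ⊕ z ≠ 0 for every v < y; (iii) x ⊕ y ⊕ w ≠ 0 for every w < z; (iv) x ⊕ v ⊕ w ≠ 0 for all v < y and w < z with v = h(w). -/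
theorem Nat.div_two_pow_eq_iff_xor_lt (a b k : ℕ) :
    a / 2 ^ k = b / 2 ^ k ↔ a ^^^ b < 2 ^ k := by
  rw [← xor_eq_zero_iff, ← Nat.xor_div_two_pow, Nat.div_eq_zero_iff_lt (by positivity)]

theorem CondA.lt_of_xor_eq {h : ℕ → ℕ} (hA : CondA h) {y z w : ℕ} (hwy : h w ≤ y)
    (hwz : w < z) (hxor : y ^^^ h w = z ^^^ w) : h z < y := by
  have hd : z ^^^ w ≠ 0 := by simpa using hwz.ne'
  set i := Nat.log 2 (z ^^^ w)
  have hlo : 2 ^ i ≤ z ^^^ w := Nat.pow_log_le_self 2 hd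
  have hhi : z ^^^ w < 2 ^ (i + 1) := Nat.lt_pow_succ_log_self one_lt_two _
  have hzw : h z / 2 ^ i = h w / 2 ^ i := by
    simpa using hA z w (i + 1) (by omega) ((Nat.div_two_pow_eq_iff_xor_lt _ _ _).2 hhi)
  have hyw : y / 2 ^ i ≠ h w / 2 ^ i := by
    rw [Ne, Nat.div_two_pow_eq_iff_xor_lt, hxor]
    omega
  have hlt : h z / 2 ^ i < y / 2 ^ i := by
    rw [hzw]
    exact lt_of_le_of_ne (Nat.div_le_div_right hwy) hyw.symm
  exact Nat.lt_of_div_lt_div hlt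

theorem stmt_6_general (h : ℕ → ℕ) (hA : CondA h)
    (x y z : ℕ) (hzero : x ^^^ y ^^^ z = 0) (hyz : y ≤ h z) :
    (∀ u < x, u ^^^ y ^^^ z ≠ 0) ∧
    (∀ v < y, x ^^^ v ^^^ z ≠ 0) ∧
    (∀ w < z, x ^^^ y ^^^ w ≠ 0) ∧
    (∀ v < y, ∀ w < z, v = h w → x ^^^ v ^^^ w ≠ 0) := by
  obtain rfl : z = x ^^^ y := (xor_eq_zero_iff.1 hzero).symm
  refine ⟨fun u hu => ?_, fun v hv => ?_, fun w hw => ?_, fun v hv w hw hvw => ?_⟩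
  · simpa [Nat.xor_left_inj] using hu.ne
  · simpa [Nat.xor_right_inj] using hv.ne
  · simpa using hw.ne'
  · subst hvw
    rw [Ne, xor_eq_zero_iff]
    intro hxw
    have hxor : y ^^^ h w = (x ^^^ y) ^^^ w := by
      conv_rhs => rw [← hxw]
      rw [xor_assoc, xor_comm x (h w), ← xor_assoc y, xor_xor_cancel_comm_assoc]
    exact (hA.lt_of_xor_eq hv.le hw hxor).not_ge hyz

theorem stmt_6 (h : ℕ → ℕ) (hmono : Monotone h) (hA : CondA h)
    (x y z : ℕ) (hzero : x ^^^ y ^^^ z = 0) (hyz : y ≤ h z) :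
    (∀ u < x, u ^^^ y ^^^ z ≠ 0) ∧
    (∀ v < y, x ^^^ v ^^^ z ≠ 0) ∧
    (∀ w < z, x ^^^ y ^^^ w ≠ 0) ∧
    (∀ v < y, ∀ w < z, v = h w → x ^^^ v ^^^ w ≠ 0) :=
  stmt_6_general h hA x y z hzero hyz
end

section
/- Let h : ℕ → ℕ be monotonically increasing and satisfy condition (a). Then the Grundy function of the chocolate bar game satisfies G_h(y,z) = y ⊕ z for all y, z ∈ ℕ with y ≤ h(z). -/
/-- The minimum excluded value of a set of natural numbers. -/
noncomputable def mex (S : Set ℕ) : ℕ := sInf {n | n ∉ S}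

/-- The Grundy function of the chocolate bar game `CB(f,·,·)`:
`G_f(y,z) = mex({G_f(v,z) : v < y} ∪ {G_f(min(y, f w), w) : w < z})`. -/
noncomputable def grundy (f : ℕ → ℕ) (y z : ℕ) : ℕ :=
  mex ({x | ∃ v, ∃ _ : v < y, x = grundy f v z} ∪
       {x | ∃ w, ∃ _ : w < z, x = grundy f (min y (f w)) w})
termination_by (z, y)

namespace Nat

theorem xor_lt_two_pow_iff_div_eq {a b i : ℕ} : a ^^^ b < 2 ^ i ↔ a / 2 ^ i = b / 2 ^ i := by
  rw [← div_eq_zero_iff_lt (by positivity), xor_div_two_pow, xor_eq_zero_iff]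

theorem exists_two_pow_le_xor_lt {a b : ℕ} (hab : a ≠ b) :
    ∃ i, 2 ^ i ≤ a ^^^ b ∧ a ^^^ b < 2 ^ (i + 1) :=
  ⟨log 2 (a ^^^ b), pow_log_le_self 2 (xor_ne_zero_iff.mpr hab),
    lt_pow_succ_log_self one_lt_two _⟩

theorem lt_of_xor_lt_two_pow {a b c i : ℕ} (hab : a < b) (hi : 2 ^ i ≤ a ^^^ b)
    (hca : c ^^^ a < 2 ^ i) : c < b := by
  have hne : a / 2 ^ i ≠ b / 2 ^ i := fun h => (xor_lt_two_pow_iff_div_eq.mpr h).not_ge hi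
  have hlt : c / 2 ^ i < b / 2 ^ i := by
    rw [xor_lt_two_pow_iff_div_eq.mp hca]
    exact (Nat.div_le_div_right hab.le).lt_of_ne hne
  exact lt_of_div_lt_div hlt

theorem exists_isFixedPt_of_xor_contracting {T : ℕ → ℕ}
    (hT : ∀ a b e, a ^^^ b < 2 ^ (e + 1) → T a ^^^ T b < 2 ^ e) (e w : ℕ)
    (hw : w ^^^ T w < 2 ^ e) : ∃ w', Function.IsFixedPt T w' ∧ w' ^^^ w < 2 ^ e := by
  induction e generalizing w with
  | zero => exact ⟨w, (xor_eq_zero_iff.mp (lt_one_iff.mp hw)).symm, by simp⟩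
  | succ e ih =>
    obtain ⟨w', hfix, hw'⟩ := ih (T w) (hT _ _ _ hw)
    refine ⟨w', hfix, ?_⟩
    rw [← xor_xor_cancel_right w' (T w), xor_assoc, xor_comm (T w)]
    exact xor_lt_two_pow (hw'.trans (Nat.pow_lt_pow_succ one_lt_two)) hw

end Nat

namespace CondA

variable {h : ℕ → ℕ} {y z w : ℕ}

theorem xor_lt_two_pow (hA : CondA h) {a b e : ℕ}
    (hab : a ^^^ b < 2 ^ (e + 1)) : h a ^^^ h b < 2 ^ e := by
  rw [Nat.xor_lt_two_pow_iff_div_eq] at hab ⊢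
  simpa using hA a b (e + 1) (Nat.le_add_left 1 e) hab

theorem min_xor_ne_xor (hA : CondA h) (hw : w < z) (hyz : y ≤ h z) :
    min y (h w) ^^^ w ≠ y ^^^ z := by
  intro heq
  rcases le_or_gt y (h w) with hy | hy
  · rw [min_eq_left hy, Nat.xor_right_inj] at heq
    exact hw.ne heq
  · rw [min_eq_right hy.le] at heq
    have hswap : h w ^^^ y = w ^^^ z := by
      rw [← Nat.xor_xor_cancel_right (h w) w, heq]
      simp [Nat.xor_left_comm, Nat.xor_comm]
    obtain ⟨i, hi, hi'⟩ := Nat.exists_two_pow_le_xor_lt hw.ne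
    have hhz : h z ^^^ h w < 2 ^ i := by
      rw [Nat.xor_comm]; exact hA.xor_lt_two_pow hi'
    exact (Nat.lt_of_xor_lt_two_pow hy (hswap ▸ hi) hhz).not_ge hyz

theorem exists_min_xor_eq (hA : CondA h) (hw : w < z) (hyz : y ≤ h z) :
    ∃ w' < z, min y (h w') ^^^ w' = y ^^^ w := by
  rcases le_or_gt y (h w) with hy | hy
  · exact ⟨w, hw, by rw [min_eq_left hy]⟩
  obtain ⟨i, hi, hi'⟩ := Nat.exists_two_pow_le_xor_lt hw.ne
  have hhz : h z ^^^ h w < 2 ^ i := by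
    rw [Nat.xor_comm]; exact hA.xor_lt_two_pow hi'
  have hhy : h w ^^^ y < 2 ^ i := by
    by_contra! hge
    exact (Nat.lt_of_xor_lt_two_pow hy hge hhz).not_ge hyz
  obtain ⟨j, hj, hj'⟩ := Nat.exists_two_pow_le_xor_lt hy.ne
  have hji : 2 ^ (j + 1) ≤ 2 ^ i :=
    Nat.pow_le_pow_right two_pos (Nat.pow_lt_pow_iff_right one_lt_two |>.mp (hj.trans_lt hhy))
  set T : ℕ → ℕ := fun v => (y ^^^ w) ^^^ h v with hT
  have hTxor : ∀ a b, T a ^^^ T b = h a ^^^ h b := fun a b => by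
    simp [hT, Nat.xor_assoc, Nat.xor_left_comm]
  have hTw : w ^^^ T w = h w ^^^ y := by
    simp [hT, Nat.xor_left_comm, Nat.xor_comm]
  obtain ⟨w', hfix, hw'⟩ := Nat.exists_isFixedPt_of_xor_contracting
    (fun a b e hab => hTxor a b ▸ hA.xor_lt_two_pow hab) (j + 1) w (hTw ▸ hj')
  have hhw' : h w' < y :=
    Nat.lt_of_xor_lt_two_pow hy hj (hA.xor_lt_two_pow hw')
  have hw'z : w' < z := Nat.lt_of_xor_lt_two_pow hw hi (hw'.trans_le hji)
  refine ⟨w', hw'z, ?_⟩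
  calc min y (h w') ^^^ w' = h w' ^^^ T w' := by rw [min_eq_right hhw'.le, hfix.eq]
    _ = y ^^^ w := by simp [hT, Nat.xor_left_comm, Nat.xor_comm]

end CondA

theorem mex_eq_of_forall_lt_mem {S : Set ℕ} {a : ℕ} (ha : a ∉ S) (hlt : ∀ b < a, b ∈ S) :
    mex S = a :=
  le_antisymm (Nat.sInf_le ha) (le_csInf ⟨a, ha⟩ fun _ hb => not_lt.mp (mt (hlt _) hb))

theorem stmt_7_general (h : ℕ → ℕ) (hA : CondA h)
    (y z : ℕ) (hyz : y ≤ h z) :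
    grundy h y z = y ^^^ z := by
  induction z using Nat.strong_induction_on generalizing y with
  | _ z ihz =>
  induction y using Nat.strong_induction_on with
  | _ y ihy =>
  have hS : ({x | ∃ v, ∃ _ : v < y, x = grundy h v z} ∪
      {x | ∃ w, ∃ _ : w < z, x = grundy h (min y (h w)) w}) =
      {x | (∃ v < y, x = v ^^^ z) ∨ ∃ w < z, x = min y (h w) ^^^ w} := by
    ext x
    simp only [Set.mem_union, Set.mem_ofPred_eq, exists_prop]
    refine or_congr (exists_congr fun v => and_congr_right fun hv => ?_)
      (exists_congr fun w => and_congr_right fun hw => ?_)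
    · rw [ihy v hv (hv.le.trans hyz)]
    · rw [ihz w hw _ (min_le_right _ _)]
  rw [grundy, hS]
  refine mex_eq_of_forall_lt_mem ?_ fun u hu => ?_
  · rintro (⟨v, hv, heq⟩ | ⟨w, hw, heq⟩)
    · exact hv.ne (Nat.xor_left_inj.mp heq.symm)
    · exact hA.min_xor_ne_xor hw hyz heq.symm
  · rcases Nat.lt_xor_cases hu with hv | hw
    · exact Or.inl ⟨u ^^^ z, hv, (Nat.xor_xor_cancel_right u z).symm⟩
    · obtain ⟨w', hw', heq⟩ := hA.exists_min_xor_eq hw hyz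
      exact Or.inr ⟨w', hw', by rw [heq, Nat.xor_comm u y, Nat.xor_xor_cancel_left]⟩

theorem stmt_7 (h : ℕ → ℕ) (hmono : Monotone h) (hA : CondA h)
    (y z : ℕ) (hyz : y ≤ h z) :
    grundy h y z = y ^^^ z :=
  stmt_7_general h hA y z hyz
end

section
/- Let f : ℕ → ℕ be monotonically increasing and suppose that its Grundy function satisfies G_f(y,z) = y ⊕ z for all y, z ∈ ℕ with y ≤ f(z). Then f satisfies condition (a): for all z, z' ∈ ℕ and every integer i ≥ 1, if ⌊z/2^i⌋ = ⌊z'/2^i⌋ then ⌊f(z)/2^(i-1)⌋ = ⌊f(z')/2^(i-1)⌋. -/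
/-!
Suppose condition (a) fails and let `z` be least such that it fails for the pair `z, z + 1`.
Then (a) holds on `[0, z]`, and some bit `e` of `z` is `0` while
`⌊f z / 2^e⌋ < ⌊f (z + 1) / 2^e⌋`. Pick `n ≥ e` with `⌊f z / 2^n⌋` even and smaller than
`⌊f (z + 1) / 2^n⌋`, and put `K = 2^n (⌊f z / 2^n⌋ + 1)`, so that `f z < K ≤ f (z + 1)`.
Take `w = z` if bit `n` of `z` is `0`; otherwise, using (a) on `[0, z]`, take `w` in the block of
length `2^n` just below `z` such that the last `n` bits of `w` and `f w` are complementary.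
Either way `Z = w ⊕ f w ⊕ K` exceeds `z`, so `K ≤ f Z` and `G(K, Z) = K ⊕ Z = f w ⊕ w = G(f w, w)`;
but `(f w, w)` is an option of `(K, Z)`, because `w < Z` and `f w < K`.
-/

lemma mex_ne_of_mem {S : Set ℕ} (hS : S.Finite) {x : ℕ} (hx : x ∈ S) : mex S ≠ x := by
  rintro rfl
  exact Nat.sInf_mem hS.infinite_compl.nonempty hx

lemma grundy_ne_of_lt_right (f : ℕ → ℕ) {y z w : ℕ} (hw : w < z) :
    grundy f y z ≠ grundy f (min y (f w)) w := by
  rw [grundy]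
  refine mex_ne_of_mem (Set.Finite.union ?_ ?_) (Or.inr ⟨w, hw, rfl⟩)
  · refine ((Set.finite_Iio y).image fun v => grundy f v z).subset ?_
    rintro _ ⟨v, hv, rfl⟩
    exact ⟨v, hv, rfl⟩
  · refine ((Set.finite_Iio z).image fun w => grundy f (min y (f w)) w).subset ?_
    rintro _ ⟨w, hw, rfl⟩
    exact ⟨w, hw, rfl⟩

lemma xor_ne_of_lt {f : ℕ → ℕ} (hG : ∀ y z : ℕ, y ≤ f z → grundy f y z = y ^^^ z)
    {y z w : ℕ} (hy : y ≤ f z) (hw : w < z) (hfw : f w ≤ y) : y ^^^ z ≠ f w ^^^ w := by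
  have h := grundy_ne_of_lt_right f (y := y) hw
  rwa [min_eq_right hfw, hG y z hy, hG (f w) w le_rfl] at h

lemma div_two_pow_eq_of_le {a b e k : ℕ} (h : a / 2 ^ e = b / 2 ^ e) (hek : e ≤ k) :
    a / 2 ^ k = b / 2 ^ k := by
  obtain ⟨d, rfl⟩ := Nat.exists_eq_add_of_le hek
  rw [pow_add, ← Nat.div_div_eq_div_mul, ← Nat.div_div_eq_div_mul, h]

lemma exists_testBit_eq_false_of_div_eq {z k : ℕ}
    (h : z / 2 ^ (k + 1) = (z + 1) / 2 ^ (k + 1)) : ∃ e ≤ k, z.testBit e = false := by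
  by_contra! hbits
  have hmod : z % 2 ^ (k + 1) = 2 ^ (k + 1) - 1 := by
    refine Nat.eq_of_testBit_eq fun i => ?_
    rw [Nat.testBit_mod_two_pow, Nat.testBit_two_pow_sub_one]
    by_cases hi : i < k + 1
    · simpa [hi] using hbits i (by omega)
    · simp [hi]
  have hpos := Nat.two_pow_pos (k + 1)
  have hsucc : z + 1 = 2 ^ (k + 1) * (z / 2 ^ (k + 1) + 1) := by
    have := Nat.div_add_mod z (2 ^ (k + 1))
    rw [mul_add]
    omega
  rw [hsucc, Nat.mul_div_cancel_left _ hpos] at h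
  omega

lemma exists_le_even_div_two_pow_lt {a b e : ℕ} (h : a / 2 ^ e < b / 2 ^ e) :
    ∃ n, e ≤ n ∧ a / 2 ^ n % 2 = 0 ∧ a / 2 ^ n < b / 2 ^ n := by
  by_contra! hodd
  have hlt : ∀ n, e ≤ n → a / 2 ^ n < b / 2 ^ n := by
    intro n hn
    induction n, hn using Nat.le_induction with
    | base => exact h
    | succ n hn ih =>
      have := hodd n hn
      rw [pow_succ, ← Nat.div_div_eq_div_mul, ← Nat.div_div_eq_div_mul]
      omega
  have hb : b / 2 ^ max e b = 0 :=
    Nat.div_eq_of_lt (b.lt_two_pow_self.trans_le (Nat.pow_le_pow_right two_pos (le_max_right e b)))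
  have := hlt (max e b) (le_max_left e b)
  rw [hb] at this
  exact Nat.not_lt_zero _ this

lemma xor_xor_two_pow_mul {w a n : ℕ} (hw : w / 2 ^ n % 2 = 0) (ha : a / 2 ^ n % 2 = 0) :
    w ^^^ a ^^^ 2 ^ n * (a / 2 ^ n + 1) = 2 ^ n * (w / 2 ^ n + 1) + (w ^^^ a) % 2 ^ n := by
  have hdiv : (w ^^^ a ^^^ 2 ^ n * (a / 2 ^ n + 1)) / 2 ^ n = w / 2 ^ n + 1 := by
    rw [Nat.xor_div_two_pow, Nat.xor_div_two_pow, Nat.mul_div_cancel_left _ (Nat.two_pow_pos n),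
      ← Nat.xor_one_of_even (Nat.even_iff.mpr ha), Nat.xor_assoc, Nat.xor_xor_cancel_left,
      Nat.xor_one_of_even (Nat.even_iff.mpr hw)]
  have hmod : (w ^^^ a ^^^ 2 ^ n * (a / 2 ^ n + 1)) % 2 ^ n = (w ^^^ a) % 2 ^ n := by
    rw [Nat.xor_mod_two_pow (a := w ^^^ a), Nat.mul_mod_right, Nat.xor_zero]
  rw [← Nat.div_add_mod (w ^^^ a ^^^ 2 ^ n * (a / 2 ^ n + 1)) (2 ^ n), hdiv, hmod]

lemma false_of_xor_witness {f : ℕ → ℕ} (hmono : Monotone f)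
    (hG : ∀ y z : ℕ, y ≤ f z → grundy f y z = y ^^^ z) {z w n : ℕ}
    (hw : w / 2 ^ n % 2 = 0) (hfw : f w / 2 ^ n % 2 = 0) (hlt : f w / 2 ^ n < f (z + 1) / 2 ^ n)
    (hz : z < 2 ^ n * (w / 2 ^ n + 1) + (w ^^^ f w) % 2 ^ n) : False := by
  set K := 2 ^ n * (f w / 2 ^ n + 1)
  have hZ : w ^^^ f w ^^^ K = 2 ^ n * (w / 2 ^ n + 1) + (w ^^^ f w) % 2 ^ n :=
    xor_xor_two_pow_mul hw hfw
  have hwZ : w < w ^^^ f w ^^^ K :=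
    hZ ▸ (Nat.lt_mul_div_succ w (Nat.two_pow_pos n)).trans_le le_self_add
  have hK : K ≤ f (z + 1) :=
    (Nat.mul_le_mul_left _ hlt).trans (Nat.mul_div_le (f (z + 1)) (2 ^ n))
  refine xor_ne_of_lt hG (hK.trans (hmono (by omega))) hwZ
    (Nat.lt_mul_div_succ (f w) (Nat.two_pow_pos n)).le ?_
  rw [Nat.xor_comm K, Nat.xor_assoc, Nat.xor_self, Nat.xor_zero, Nat.xor_comm]

/-- Condition (a) on `[0, N]`, written with `i = k + 1`. -/
def CondAUpTo (f : ℕ → ℕ) (N : ℕ) : Prop :=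
  ∀ u v k : ℕ, u ≤ N → v ≤ N → u / 2 ^ (k + 1) = v / 2 ^ (k + 1) → f u / 2 ^ k = f v / 2 ^ k

lemma condAUpTo_of_succ {f : ℕ → ℕ} {N : ℕ}
    (h : ∀ u < N, ∀ k, u / 2 ^ (k + 1) = (u + 1) / 2 ^ (k + 1) →
      f u / 2 ^ k = f (u + 1) / 2 ^ k) :
    CondAUpTo f N := by
  have hle : ∀ u v k, u ≤ v → v ≤ N → u / 2 ^ (k + 1) = v / 2 ^ (k + 1) →
      f u / 2 ^ k = f v / 2 ^ k := by
    intro u v k huv hvN huv'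
    induction v, huv using Nat.le_induction with
    | base => rfl
    | succ v huv ih =>
      have h1 : u / 2 ^ (k + 1) ≤ v / 2 ^ (k + 1) := Nat.div_le_div_right huv
      have h2 : v / 2 ^ (k + 1) ≤ (v + 1) / 2 ^ (k + 1) := Nat.div_le_div_right v.le_succ
      rw [ih (by omega) (by omega), h v (by omega) k (by omega)]
  intro u v k hu hv huv
  rcases le_total u v with h' | h'
  · exact hle u v k h' hv huv
  · exact (hle v u k h' hu huv.symm).symm

lemma condA_of_succ {f : ℕ → ℕ}
    (h : ∀ u k, u / 2 ^ (k + 1) = (u + 1) / 2 ^ (k + 1) → f u / 2 ^ k = f (u + 1) / 2 ^ k) :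
    CondA f := by
  intro z z' i hi hzz'
  obtain ⟨k, rfl⟩ : ∃ k, i = k + 1 := ⟨i - 1, by omega⟩
  exact condAUpTo_of_succ (N := max z z') (fun u _ k => h u k) z z' k
    (le_max_left z z') (le_max_right z z') hzz'

/-- Halve the block `m` times, each time keeping the half whose next bit is opposite to the bit
of `f` that condition (a) makes constant on the current block. -/
lemma exists_xor_mod_two_pow_eq {f : ℕ → ℕ} {N : ℕ} (hf : CondAUpTo f N) :
    ∀ m q, 2 ^ m * (q + 1) ≤ N + 1 → ∃ x, x / 2 ^ m = q ∧ (x ^^^ f x) % 2 ^ m = 2 ^ m - 1 := by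
  intro m
  induction m with
  | zero => exact fun q _ => ⟨q, by simp, by simp [Nat.mod_one]⟩
  | succ m ih =>
    intro q hq
    set β := f (2 ^ (m + 1) * q) / 2 ^ m % 2
    have hpow : (2 : ℕ) ^ (m + 1) = 2 ^ m * 2 := pow_succ 2 m
    obtain ⟨x, hxq, hx⟩ := ih (2 * q + (1 - β)) <| calc
      _ ≤ 2 ^ m * (2 * q + 2) := Nat.mul_le_mul_left _ (by omega)
      _ = 2 ^ (m + 1) * (q + 1) := by ring
      _ ≤ N + 1 := hq
    have hxq' : x / 2 ^ (m + 1) = q := by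
      rw [hpow, ← Nat.div_div_eq_div_mul, hxq]
      omega
    have hxN : x ≤ N := by
      have := Nat.lt_mul_div_succ x (Nat.two_pow_pos (m + 1))
      rw [hxq'] at this
      omega
    have hqN : 2 ^ (m + 1) * q ≤ N := hxq' ▸ (Nat.mul_div_le x _).trans hxN
    have hfx : f x / 2 ^ m = f (2 ^ (m + 1) * q) / 2 ^ m :=
      hf x _ m hxN hqN (by rw [hxq', Nat.mul_div_cancel_left _ (Nat.two_pow_pos _)])
    refine ⟨x, hxq', ?_⟩
    have hbit : (x ^^^ f x) / 2 ^ m % 2 = 1 := by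
      rw [Nat.xor_div_two_pow, Nat.xor_mod_two_eq, hxq, hfx]
      omega
    rw [Nat.mod_pow_succ, hx, hbit, pow_succ]
    have := Nat.two_pow_pos m
    omega

lemma false_of_condAUpTo {f : ℕ → ℕ} (hmono : Monotone f)
    (hG : ∀ y z : ℕ, y ≤ f z → grundy f y z = y ^^^ z) {z e : ℕ} (hf : CondAUpTo f z)
    (hze : z.testBit e = false) (hlt : f z / 2 ^ e < f (z + 1) / 2 ^ e) : False := by
  obtain ⟨n, hen, hT, hTlt⟩ := exists_le_even_div_two_pow_lt hlt
  have hpos := Nat.two_pow_pos n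
  cases hzn : z.testBit n
  · rw [Nat.testBit_eq_decide_div_mod_eq, decide_eq_false_iff_not] at hzn
    exact false_of_xor_witness hmono hG (by omega) hT hTlt
      (by have := Nat.lt_mul_div_succ z hpos; omega)
  · have hen' : e < n := hen.lt_of_ne (by rintro rfl; simp [hze] at hzn)
    rw [Nat.testBit_eq_decide_div_mod_eq, decide_eq_true_iff] at hzn
    obtain ⟨q, hzq⟩ : ∃ q, z / 2 ^ n = q + 1 :=
      Nat.exists_eq_add_one.mpr (Nat.pos_of_ne_zero fun h => by simp [h] at hzn)
    rw [hzq] at hzn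
    have hzdiv : 2 ^ n * (q + 1) + z % 2 ^ n = z := hzq ▸ Nat.div_add_mod z (2 ^ n)
    obtain ⟨x, hxq, hx⟩ := exists_xor_mod_two_pow_eq hf n q (by omega)
    have hxz : x ≤ z := by
      have := Nat.lt_mul_div_succ x hpos
      rw [hxq] at this
      omega
    have hfx : f x / 2 ^ n = f z / 2 ^ n := hf x z n hxz le_rfl (by
      rw [pow_succ, ← Nat.div_div_eq_div_mul, ← Nat.div_div_eq_div_mul, hxq, hzq]
      omega)
    have hzmod : z % 2 ^ n ≠ 2 ^ n - 1 := by
      intro h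
      have := congrArg (Nat.testBit · e) h
      simp [Nat.testBit_mod_two_pow, Nat.testBit_two_pow_sub_one, hze, hen'] at this
    refine false_of_xor_witness hmono hG (w := x) (by omega) (hfx ▸ hT) (hfx ▸ hTlt) ?_
    rw [hx, hxq]
    have := Nat.mod_lt z hpos
    omega

theorem stmt_8 (f : ℕ → ℕ) (hmono : Monotone f)
    (hG : ∀ y z : ℕ, y ≤ f z → grundy f y z = y ^^^ z) :
    CondA f := by
  by_contra hA
  have hbad : ∃ z k, z / 2 ^ (k + 1) = (z + 1) / 2 ^ (k + 1) ∧
      f z / 2 ^ k ≠ f (z + 1) / 2 ^ k := by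
    by_contra! hsucc
    exact hA (condA_of_succ hsucc)
  classical
  obtain ⟨k, hdiv, hne⟩ := Nat.find_spec hbad
  have hf : CondAUpTo f (Nat.find hbad) := condAUpTo_of_succ fun u hu k h =>
    by_contra fun hne => Nat.find_min hbad hu ⟨k, h, hne⟩
  obtain ⟨e, hek, he⟩ := exists_testBit_eq_false_of_div_eq hdiv
  have hne' := mt (div_two_pow_eq_of_le (k := k) · hek) hne
  exact false_of_condAUpTo hmono hG hf he
    ((Nat.div_le_div_right (hmono (Nat.le_succ _))).lt_of_ne hne')
end

section
/- Let f : ℕ → ℕ be monotonically increasing, and let y, z, y' ∈ ℕ satisfy y = f(z), y' ≤ f(z+1) and y < y'. Then the Grundy function satisfies G_f(y, z+1) < G_f(y', z+1). -/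
lemma mex_le {S : Set ℕ} {n : ℕ} (h : n ∉ S) : mex S ≤ n := Nat.sInf_le h

lemma options_finite (f : ℕ → ℕ) (y z : ℕ) :
    ({x | ∃ v, ∃ _ : v < y, x = grundy f v z} ∪
     {x | ∃ w, ∃ _ : w < z, x = grundy f (min y (f w)) w}).Finite := by
  apply Set.Finite.union
  · have h : {x | ∃ v, ∃ _ : v < y, x = grundy f v z}
        ⊆ (fun v => grundy f v z) '' Set.Iio y := by
      rintro x ⟨v, hv, rfl⟩; exact ⟨v, hv, rfl⟩
    exact ((Set.finite_Iio y).image _).subset h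
  · have h : {x | ∃ w, ∃ _ : w < z, x = grundy f (min y (f w)) w}
        ⊆ (fun w => grundy f (min y (f w)) w) '' Set.Iio z := by
      rintro x ⟨w, hw, rfl⟩; exact ⟨w, hw, rfl⟩
    exact ((Set.finite_Iio z).image _).subset h

lemma mex_not_mem {S : Set ℕ} (h : S.Finite) : mex S ∉ S := by
  have hne : {n | n ∉ S}.Nonempty := by
    have h1 : (Sᶜ : Set ℕ).Infinite := h.infinite_compl
    exact h1.nonempty
  exact Nat.sInf_mem hne

theorem stmt_9 (f : ℕ → ℕ) (hmono : Monotone f)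
    (y z y' : ℕ) (hy : y = f z) (hy' : y' ≤ f (z + 1)) (hlt : y < y') :
    grundy f y (z + 1) < grundy f y' (z + 1) := by
  set S : Set ℕ := {x | ∃ v, ∃ _ : v < y, x = grundy f v (z + 1)} ∪
       {x | ∃ w, ∃ _ : w < z + 1, x = grundy f (min y (f w)) w} with hS
  set S' : Set ℕ := {x | ∃ v, ∃ _ : v < y', x = grundy f v (z + 1)} ∪
       {x | ∃ w, ∃ _ : w < z + 1, x = grundy f (min y' (f w)) w} with hS'
  have hGy : grundy f y (z + 1) = mex S := by rw [grundy]
  have hGy' : grundy f y' (z + 1) = mex S' := by rw [grundy]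
  have hmin : ∀ w, w < z + 1 → min y' (f w) = min y (f w) := by
    intro w hw
    have h1 : f w ≤ y := hy ▸ hmono (Nat.lt_succ_iff.mp hw)
    rw [min_eq_right h1, min_eq_right (h1.trans hlt.le)]
  have hsub : S ⊆ S' := by
    rintro x (⟨v, hv, rfl⟩ | ⟨w, hw, rfl⟩)
    · exact Or.inl ⟨v, hv.trans hlt, rfl⟩
    · exact Or.inr ⟨w, hw, by rw [hmin w hw]⟩
  have hmem : grundy f y (z + 1) ∈ S' := Or.inl ⟨y, hlt, rfl⟩
  have hfin' : S'.Finite := options_finite f y' (z + 1)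
  have hnot : mex S' ∉ S' := mex_not_mem hfin'
  have hle : mex S ≤ mex S' := mex_le (fun h => hnot (hsub h))
  have hne : mex S' ≠ mex S := by
    intro h
    exact hnot (h ▸ (hGy ▸ hmem))
  rw [hGy, hGy']
  exact lt_of_le_of_ne hle (Ne.symm hne)
end

section
/- Let f : ℕ → ℕ be monotonically increasing and suppose that its Grundy function satisfies G_f(y,z) = y ⊕ z for all y, z ∈ ℕ with y ≤ f(z). Let a = d·2^(i+1) + d_i·2^i + e − 1 where d, e, i ∈ ℕ, d_i ∈ {0,1}, e < 2^i and 0 < d_i·2^i + e. If c·2^(i+1) ≤ f(a) < c·2^(i+1) + 2^i for some c ∈ ℕ, then f(a+1) < c·2^(i+1) + 2^i. -/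
lemma mex_notMem {S : Set ℕ} (hS : S.Finite) : mex S ∉ S :=
  Nat.sInf_mem (s := {n | n ∉ S}) hS.infinite_compl.nonempty

lemma mem_of_lt_mex {S : Set ℕ} {u : ℕ} (h : u < mex S) : u ∈ S := by
  simpa using Nat.notMem_of_lt_sInf h

section Grundy

variable (f : ℕ → ℕ) {y z w u : ℕ}

lemma grundy_options_finite (y z : ℕ) :
    ({x | ∃ v, ∃ _ : v < y, x = grundy f v z} ∪
      {x | ∃ w, ∃ _ : w < z, x = grundy f (min y (f w)) w}).Finite := by
  refine ((Set.finite_Iio y).image (grundy f · z)).union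
    ((Set.finite_Iio z).image fun w => grundy f (min y (f w)) w) |>.subset ?_
  rintro x (⟨v, hv, rfl⟩ | ⟨w, hw, rfl⟩)
  exacts [Or.inl ⟨v, hv, rfl⟩, Or.inr ⟨w, hw, rfl⟩]

lemma grundy_min_ne (hw : w < z) : grundy f (min y (f w)) w ≠ grundy f y z := by
  intro h
  apply mex_notMem (grundy_options_finite f y z)
  rw [← grundy.eq_1, ← h]
  exact Or.inr ⟨w, hw, rfl⟩

lemma exists_grundy_eq_of_lt (hu : u < grundy f y z) :
    (∃ v < y, grundy f v z = u) ∨ ∃ w < z, grundy f (min y (f w)) w = u := by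
  rw [grundy.eq_1] at hu
  rcases mem_of_lt_mex hu with ⟨v, hv, rfl⟩ | ⟨w, hw, rfl⟩
  exacts [Or.inl ⟨v, hv, rfl⟩, Or.inr ⟨w, hw, rfl⟩]

variable {f} (hG : ∀ y z : ℕ, y ≤ f z → grundy f y z = y ^^^ z)
include hG

lemma apply_xor_ne_xor (hw : w < z) (hwy : f w ≤ y) (hyz : y ≤ f z) :
    f w ^^^ w ≠ y ^^^ z := by
  have h := grundy_min_ne f (y := y) hw
  rwa [min_eq_right hwy, hG _ _ le_rfl, hG _ _ hyz] at h

lemma exists_apply_xor_eq_of_le (hmono : Monotone f) (hu : u ≤ f z ^^^ z) :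
    u ^^^ z < f z ∨ ∃ w ≤ z, f w ^^^ w = u := by
  rcases hu.lt_or_eq with hu | rfl
  · rw [← hG _ _ le_rfl] at hu
    rcases exists_grundy_eq_of_lt f hu with ⟨v, hv, rfl⟩ | ⟨w, hw, rfl⟩
    · left
      rwa [hG _ _ hv.le, Nat.xor_xor_cancel_right]
    · right
      rw [min_eq_right (hmono hw.le), hG _ _ le_rfl]
      exact ⟨w, hw.le, rfl⟩
  · exact Or.inr ⟨z, le_rfl, rfl⟩

end Grundy

lemma mul_two_pow_add_xor_mul_two_pow_add {k x y u v : ℕ} (hu : u < 2 ^ k) (hv : v < 2 ^ k) :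
    (x * 2 ^ k + u) ^^^ (y * 2 ^ k + v) = (x ^^^ y) * 2 ^ k + (u ^^^ v) := by
  apply Nat.eq_of_testBit_eq
  intro j
  rw [Nat.mul_comm x, Nat.mul_comm y, Nat.mul_comm (x ^^^ y), Nat.testBit_xor,
    Nat.testBit_two_pow_mul_add _ hu, Nat.testBit_two_pow_mul_add _ hv,
    Nat.testBit_two_pow_mul_add _ (Nat.xor_lt_two_pow hu hv)]
  by_cases hj : j < k <;> simp [hj]

lemma xor_two_pow_add {k u v : ℕ} (hu : u < 2 ^ k) (hv : v < 2 ^ k) :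
    u ^^^ (2 ^ k + v) = 2 ^ k + (u ^^^ v) := by
  simpa using mul_two_pow_add_xor_mul_two_pow_add (x := 0) (y := 1) hu hv

lemma two_pow_xor_two_pow_add {k v : ℕ} (hv : v < 2 ^ k) : 2 ^ k ^^^ (2 ^ k + v) = v := by
  simpa using mul_two_pow_add_xor_mul_two_pow_add (x := 1) (y := 1) (Nat.two_pow_pos k) hv

section Bound

variable {f : ℕ → ℕ} (hmono : Monotone f)
  (hG : ∀ y z : ℕ, y ≤ f z → grundy f y z = y ^^^ z) {c d i L : ℕ}
include hmono hG

lemma apply_succ_lt_of_lt_two_pow (hL : L < 2 ^ i)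
    (h1 : c * 2 ^ (i + 1) ≤ f (d * 2 ^ (i + 1) + L))
    (h2 : f (d * 2 ^ (i + 1) + L) < c * 2 ^ (i + 1) + 2 ^ i) :
    f (d * 2 ^ (i + 1) + L + 1) < c * 2 ^ (i + 1) + 2 ^ i := by
  have hK := Nat.two_pow_succ i
  obtain ⟨r, hr, hfa⟩ : ∃ r < 2 ^ i, f (d * 2 ^ (i + 1) + L) = c * 2 ^ (i + 1) + r :=
    ⟨_, by omega, (Nat.add_sub_of_le h1).symm⟩
  have hLr : L ^^^ r < 2 ^ i := Nat.xor_lt_two_pow hL hr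
  by_contra! hF
  have hz : c * 2 ^ (i + 1) + 2 ^ i ≤ f (d * 2 ^ (i + 1) + (2 ^ i + (L ^^^ r))) :=
    hF.trans (hmono (by omega))
  refine apply_xor_ne_xor hG (by omega) h2.le hz ?_
  rw [hfa, mul_two_pow_add_xor_mul_two_pow_add (by omega) (by omega),
    mul_two_pow_add_xor_mul_two_pow_add (by omega) (by omega), two_pow_xor_two_pow_add hLr,
    Nat.xor_comm r]

lemma apply_succ_lt_of_two_pow_le (hL : 2 ^ i ≤ L) (hLK : L + 1 < 2 ^ (i + 1))
    (h1 : c * 2 ^ (i + 1) ≤ f (d * 2 ^ (i + 1) + L))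
    (h2 : f (d * 2 ^ (i + 1) + L) < c * 2 ^ (i + 1) + 2 ^ i) :
    f (d * 2 ^ (i + 1) + L + 1) < c * 2 ^ (i + 1) + 2 ^ i := by
  have hK := Nat.two_pow_succ i
  obtain ⟨r, hr, hfa⟩ : ∃ r < 2 ^ i, f (d * 2 ^ (i + 1) + L) = c * 2 ^ (i + 1) + r :=
    ⟨_, by omega, (Nat.add_sub_of_le h1).symm⟩
  obtain ⟨E, rfl⟩ : ∃ E, L = 2 ^ i + E := ⟨L - 2 ^ i, by omega⟩
  have hE : E + 1 < 2 ^ i := by omega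
  by_contra! hF
  rw [add_assoc _ _ 1, add_assoc _ E 1] at hF
  have hu : (c ^^^ d) * 2 ^ (i + 1) + (E + 1) ≤ f (d * 2 ^ (i + 1) + (2 ^ i + E)) ^^^
      (d * 2 ^ (i + 1) + (2 ^ i + E)) := by
    rw [hfa, mul_two_pow_add_xor_mul_two_pow_add (by omega) (by omega),
      xor_two_pow_add hr (by omega)]
    omega
  rcases exists_apply_xor_eq_of_le hG hmono hu with hlt | ⟨w, hw, hfw⟩
  · rw [mul_two_pow_add_xor_mul_two_pow_add (by omega) (by omega), Nat.xor_xor_cancel_right,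
      xor_two_pow_add hE (by omega)] at hlt
    omega
  · refine apply_xor_ne_xor hG (y := c * 2 ^ (i + 1) + 2 ^ i) (by omega)
      ((hmono hw).trans h2.le) hF ?_
    rw [hfw, mul_two_pow_add_xor_mul_two_pow_add (by omega) (by omega),
      two_pow_xor_two_pow_add hE]

end Bound

theorem stmt_11 (f : ℕ → ℕ) (hmono : Monotone f)
    (hG : ∀ y z : ℕ, y ≤ f z → grundy f y z = y ^^^ z)
    (d e i di c a : ℕ) (hdi : di = 0 ∨ di = 1) (he : e < 2 ^ i)
    (hpos : 0 < di * 2 ^ i + e)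
    (ha : a = d * 2 ^ (i + 1) + di * 2 ^ i + e - 1)
    (h1 : c * 2 ^ (i + 1) ≤ f a) (h2 : f a < c * 2 ^ (i + 1) + 2 ^ i) :
    f (a + 1) < c * 2 ^ (i + 1) + 2 ^ i := by
  have hK := Nat.two_pow_succ i
  obtain ⟨L, rfl, hL⟩ : ∃ L, a = d * 2 ^ (i + 1) + L ∧ L + 1 < 2 ^ (i + 1) :=
    ⟨di * 2 ^ i + e - 1, by omega, by rcases hdi with rfl | rfl <;> omega⟩
  rcases lt_or_ge L (2 ^ i) with hLi | hLi
  · exact apply_succ_lt_of_lt_two_pow hmono hG hLi h1 h2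
  · exact apply_succ_lt_of_two_pow_le hmono hG hLi hL h1 h2
end

section
/- Let p ∈ ℕ and let s ≥ 1 be a natural number. Then i ⊕ s = i + s for every i with 0 ≤ i ≤ p if and only if there exist a natural number u ≥ 1 and a non-negative integer v such that s = u·2^v and 2^v > p. -/
/-!
Since `a + b = (a ^^^ b) + 2 * (a &&& b)`, the nim-sum equals the ordinary sum exactly when the
summands share no binary digit. The numbers `i ≤ p` include every `2 ^ j` with `j < size p` and
are all below `2 ^ size p`, so `s` shares no digit with any of them iff its lowest `size p` digits
vanish, i.e. iff `2 ^ size p ∣ s`.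
-/

namespace Nat

theorem add_eq_xor_add_two_mul_and (a b : ℕ) : a + b = (a ^^^ b) + 2 * (a &&& b) := by
  induction a using Nat.binaryRec generalizing b with
  | zero => simp
  | bit c a ih =>
    induction b using Nat.binaryRec with
    | zero => simp
    | bit d b _ =>
      rw [xor_bit, land_bit]
      simp only [bit_val]
      have := ih b
      cases c <;> cases d <;> simp <;> omega

theorem xor_eq_add_iff_and_eq_zero {a b : ℕ} : a ^^^ b = a + b ↔ a &&& b = 0 := by
  have := add_eq_xor_add_two_mul_and a b
  omega

theorem two_pow_dvd_iff_testBit_eq_false {n b : ℕ} :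
    2 ^ n ∣ b ↔ ∀ j < n, b.testBit j = false := by
  rw [dvd_iff_mod_eq_zero]
  constructor
  · intro h j hj
    simpa [hj, h] using testBit_mod_two_pow b n j
  · intro h
    apply eq_of_testBit_eq
    intro j
    rw [testBit_mod_two_pow, zero_testBit]
    by_cases hj : j < n <;> simp [hj, h]

theorem and_eq_zero_of_lt_two_pow_of_two_pow_dvd {a b n : ℕ} (ha : a < 2 ^ n) (hb : 2 ^ n ∣ b) :
    a &&& b = 0 := by
  apply eq_of_testBit_eq
  intro j
  rw [testBit_and, zero_testBit]
  by_cases hj : j < n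
  · simp [two_pow_dvd_iff_testBit_eq_false.1 hb j hj]
  · simp [testBit_lt_two_pow (ha.trans_le (Nat.pow_le_pow_right two_pos (not_lt.1 hj)))]

theorem forall_le_and_eq_zero_iff_two_pow_size_dvd {p s : ℕ} :
    (∀ i ≤ p, i &&& s = 0) ↔ 2 ^ p.size ∣ s := by
  refine ⟨fun h => two_pow_dvd_iff_testBit_eq_false.2 fun j hj => ?_,
    fun h i hi => and_eq_zero_of_lt_two_pow_of_two_pow_dvd (hi.trans_lt p.lt_size_self) h⟩
  have := h (2 ^ j) (lt_size.1 hj)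
  rw [two_pow_and] at this
  simpa using this

end Nat

theorem stmt_12 (p s : ℕ) (hs : 1 ≤ s) :
    (∀ i ≤ p, i ^^^ s = i + s) ↔
    (∃ u v : ℕ, 1 ≤ u ∧ s = u * 2 ^ v ∧ p < 2 ^ v) := by
  simp only [Nat.xor_eq_add_iff_and_eq_zero, Nat.forall_le_and_eq_zero_iff_two_pow_size_dvd]
  constructor
  · rintro ⟨u, rfl⟩
    exact ⟨u, p.size, Nat.pos_of_mul_pos_left hs, mul_comm _ _, p.lt_size_self⟩
  · rintro ⟨u, v, -, rfl, hp⟩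
    exact (pow_dvd_pow 2 (Nat.size_le.2 hp)).mul_left u
end

section
/- Let p ∈ ℕ and let s ≥ 1 be a natural number such that i ⊕ s = i + s for every i with 0 ≤ i ≤ p. Then for every j with 0 ≤ j ≤ p, the set {j ⊕ i : i = 0, 1, ..., s−1} equals the set {0, 1, ..., s−1}. -/
/-! Every bit of `s` sits at a position `c` with `p < 2 ^ c`: otherwise `i = 2 ^ c ≤ p` would share
that bit with `s`, and then `i ^^^ s < i + s`. Taking `c` to be the lowest bit of `s` (any `c` with
`p < 2 ^ c` if `s = 0`), `s` is a multiple of `2 ^ c` while `j < 2 ^ c`. Xoring with `j` only changes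
the digits below `2 ^ c`, so it preserves `x / 2 ^ c` and hence the interval `[0, s)`; being an
involution, it maps that interval onto itself. -/

namespace Nat

theorem two_pow_xor_lt_of_testBit {s c : ℕ} (h : s.testBit c) : 2 ^ c ^^^ s < s := by
  refine Nat.lt_of_testBit c ?_ h fun k hk => ?_
  · simp [Nat.testBit_xor, h]
  · simp [Nat.testBit_xor, Nat.testBit_two_pow_of_ne (Nat.ne_of_lt hk)]

theorem testBit_two_pow_factorization {s : ℕ} (hs : s ≠ 0) : s.testBit (s.factorization 2) := by
  have hodd : ¬2 ∣ s / 2 ^ s.factorization 2 := Nat.not_dvd_ordCompl Nat.prime_two hs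
  simpa [Nat.testBit_eq_decide_div_mod_eq, Nat.two_dvd_ne_zero] using hodd

theorem lt_two_pow_of_xor_eq_add {p s c : ℕ} (hxor : ∀ i ≤ p, i ^^^ s = i + s)
    (hc : s.testBit c) : p < 2 ^ c := by
  by_contra! hle
  have hlt := two_pow_xor_lt_of_testBit hc
  rw [hxor _ hle] at hlt
  exact (Nat.le_add_left s _).not_gt hlt

theorem exists_two_pow_dvd_of_xor_eq_add {p s : ℕ} (hxor : ∀ i ≤ p, i ^^^ s = i + s) :
    ∃ c, p < 2 ^ c ∧ 2 ^ c ∣ s := by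
  rcases eq_or_ne s 0 with rfl | hs
  · exact ⟨p, Nat.lt_two_pow_self, dvd_zero _⟩
  · exact ⟨_, lt_two_pow_of_xor_eq_add hxor (testBit_two_pow_factorization hs),
      Nat.ordProj_dvd s 2⟩

theorem xor_lt_of_two_pow_dvd {j x s c : ℕ} (hj : j < 2 ^ c) (hs : 2 ^ c ∣ s) (hx : x < s) :
    j ^^^ x < s := by
  have hdiv : (j ^^^ x) / 2 ^ c = x / 2 ^ c := by
    rw [Nat.xor_div_two_pow, Nat.div_eq_of_lt hj, Nat.zero_xor]
  exact Nat.lt_of_div_lt_div (hdiv ▸ Nat.div_lt_div_of_lt_of_dvd hs hx)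

theorem image_xor_Iio_of_two_pow_dvd {j s c : ℕ} (hj : j < 2 ^ c) (hs : 2 ^ c ∣ s) :
    (fun i => j ^^^ i) '' Set.Iio s = Set.Iio s := by
  refine Set.Subset.antisymm ?_ fun x hx => ?_
  · rintro _ ⟨x, hx, rfl⟩
    exact xor_lt_of_two_pow_dvd hj hs hx
  · exact ⟨j ^^^ x, xor_lt_of_two_pow_dvd hj hs hx, Nat.xor_xor_cancel_left j x⟩

end Nat

theorem stmt_13_general (p s : ℕ) (hxor : ∀ i ≤ p, i ^^^ s = i + s)
    (j : ℕ) (hj : j ≤ p) :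
    (fun i => j ^^^ i) '' Set.Iio s = Set.Iio s := by
  obtain ⟨c, hpc, hdvd⟩ := Nat.exists_two_pow_dvd_of_xor_eq_add hxor
  exact Nat.image_xor_Iio_of_two_pow_dvd (hj.trans_lt hpc) hdvd

theorem stmt_13 (p s : ℕ) (hs : 1 ≤ s) (hxor : ∀ i ≤ p, i ^^^ s = i + s)
    (j : ℕ) (hj : j ≤ p) :
    (fun i => j ^^^ i) '' Set.Iio s = Set.Iio s :=
  stmt_13_general p s hxor j hj
end

section
/- Let h : ℕ → ℕ be monotonically increasing and satisfy condition (a), and let s ≥ 1 be a natural number such that i ⊕ s = i + s for every i with 0 ≤ i ≤ h(s). Then for all y, z ∈ ℕ with y ≤ h(z+s): y ⊕ (z+s) = mex({v ⊕ (z+s) : v < y} ∪ {0, 1, ..., s−1} ∪ {min(y, h(w)) ⊕ w : s ≤ w < z+s}); in particular, y ⊕ (z+s) ≥ s. -/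
theorem Nat.div_two_pow_succ (a j : ℕ) : a / 2 ^ (j + 1) = a / 2 ^ j / 2 := by
  rw [Nat.div_div_eq_div_mul, pow_succ]

theorem Nat.exists_div_two_pow_eq_of_lt {a b : ℕ} (hab : a < b) :
    ∃ j, a / 2 ^ (j + 1) = b / 2 ^ (j + 1) ∧ a / 2 ^ j % 2 = 0 ∧ b / 2 ^ j % 2 = 1 := by
  have hne : a ^^^ b ≠ 0 := fun h => hab.ne (xor_eq_zero_iff.mp h)
  set j := Nat.log 2 (a ^^^ b)
  have hhigh : (a ^^^ b) / 2 ^ (j + 1) = 0 :=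
    Nat.div_eq_of_lt (Nat.lt_pow_succ_log_self one_lt_two _)
  have hbit : 1 ≤ (a ^^^ b) / 2 ^ j :=
    (Nat.one_le_div_iff (Nat.two_pow_pos j)).mpr (Nat.pow_log_le_self 2 hne)
  have hpar : (a / 2 ^ j + b / 2 ^ j) % 2 = 1 := by
    rw [← Nat.xor_mod_two_eq, ← Nat.xor_div_two_pow]
    rw [Nat.div_two_pow_succ] at hhigh
    omega
  have hle : a / 2 ^ j ≤ b / 2 ^ j := Nat.div_le_div_right hab.le
  rw [Nat.xor_div_two_pow, xor_eq_zero_iff] at hhigh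
  refine ⟨j, hhigh, ?_, ?_⟩ <;>
  · rw [Nat.div_two_pow_succ, Nat.div_two_pow_succ] at hhigh
    omega

theorem Nat.lt_of_div_two_pow_eq {a b j : ℕ} (h : a / 2 ^ (j + 1) = b / 2 ^ (j + 1))
    (ha : a / 2 ^ j % 2 = 0) (hb : b / 2 ^ j % 2 = 1) : a < b := by
  rw [Nat.div_two_pow_succ, Nat.div_two_pow_succ] at h
  exact Nat.lt_of_div_lt_div (c := 2 ^ j) (by omega)

theorem Nat.min_div (a b c : ℕ) : min a b / c = min (a / c) (b / c) :=
  Monotone.map_min fun _ _ => Nat.div_le_div_right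

theorem Nat.xor_div_two_pow_mod_two (a b j : ℕ) :
    (a ^^^ b) / 2 ^ j % 2 = (a / 2 ^ j + b / 2 ^ j) % 2 := by
  rw [Nat.xor_div_two_pow, Nat.xor_mod_two_eq]

theorem mex_eq_of_notMem_of_forall_lt_mem {S : Set ℕ} {g : ℕ} (hg : g ∉ S)
    (hlt : ∀ n < g, n ∈ S) : mex S = g :=
  le_antisymm (Nat.sInf_le hg) <|
    le_csInf ⟨g, hg⟩ fun _ hb => not_lt.mp fun hbg => hb (hlt _ hbg)

namespace CondA

variable {h : ℕ → ℕ}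

theorem div_eq (hA : CondA h) {a b j : ℕ} (hab : a / 2 ^ (j + 1) = b / 2 ^ (j + 1)) :
    h a / 2 ^ j = h b / 2 ^ j := by
  simpa using hA a b (j + 1) (Nat.le_add_left 1 j) hab

theorem of_div_eq
    (H : ∀ a b j : ℕ, a / 2 ^ (j + 1) = b / 2 ^ (j + 1) → h a / 2 ^ j = h b / 2 ^ j) :
    CondA h := by
  intro a b i hi hab
  obtain ⟨j, rfl⟩ : ∃ j, i = j + 1 := ⟨i - 1, by omega⟩
  simpa using H a b j hab

theorem comp_xor (hA : CondA h) (n : ℕ) : CondA fun u => h (n ^^^ u) :=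
  of_div_eq fun a b j hab => hA.div_eq (by rw [Nat.xor_div_two_pow, Nat.xor_div_two_pow, hab])

theorem min_left (hA : CondA h) (y : ℕ) : CondA fun u => min y (h u) :=
  of_div_eq fun a b j hab => by
    rw [Nat.min_div, Nat.min_div, hA.div_eq hab]

theorem exists_isFixedPt (hA : CondA h) :
    ∀ {j q : ℕ}, (∀ t, t / 2 ^ j = q → h t / 2 ^ j = q) →
      ∃ t, t / 2 ^ j = q ∧ Function.IsFixedPt h t
  | 0, q, hmaps => ⟨q, by simp, show h q = q by simpa using hmaps q (by simp)⟩
  | j + 1, q, hmaps => by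
    have hq : (q * 2 ^ (j + 1)) / 2 ^ (j + 1) = q := Nat.mul_div_cancel q (Nat.two_pow_pos _)
    set c := h (q * 2 ^ (j + 1)) / 2 ^ j
    -- by condition (a) `h t / 2 ^ j = c` on all of block `q`, which contains block `c`
    have hsub : ∀ t, t / 2 ^ j = c → t / 2 ^ (j + 1) = q := by
      intro t ht
      rw [Nat.div_two_pow_succ, ht, ← Nat.div_two_pow_succ, hmaps _ hq]
    obtain ⟨t, ht, hfix⟩ := exists_isFixedPt hA (j := j) (q := c) fun t ht =>
      hA.div_eq ((hsub t ht).trans hq.symm)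
    exact ⟨t, hsub t ht, hfix⟩

end CondA

theorem exists_two_pow_dvd_lt_of_xor_eq_add {s m : ℕ} (hxor : ∀ i ≤ m, i ^^^ s = i + s) :
    ∃ k, 2 ^ k ∣ s ∧ m < 2 ^ k := by
  rcases eq_or_ne s 0 with rfl | hs
  · exact ⟨m, dvd_zero _, Nat.lt_two_pow_self⟩
  obtain ⟨k, r, ⟨r, rfl⟩, rfl⟩ := Nat.exists_eq_two_pow_mul_odd hs
  refine ⟨k, dvd_mul_right _ _, not_le.mp fun hle => ?_⟩
  -- bit `k` of `s` is set, so adding `2 ^ k` carries into bit `k + 1` while xor does not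
  have hxor_div : (2 ^ k ^^^ 2 ^ k * (2 * r + 1)) / 2 ^ (k + 1) = r := by
    rw [Nat.xor_div_two_pow, Nat.div_eq_of_lt (Nat.pow_lt_pow_right one_lt_two k.lt_succ_self),
      Nat.zero_xor, Nat.div_two_pow_succ, Nat.mul_div_cancel_left _ (Nat.two_pow_pos k)]
    omega
  have hadd_div : (2 ^ k + 2 ^ k * (2 * r + 1)) / 2 ^ (k + 1) = r + 1 := by
    rw [show 2 ^ k + 2 ^ k * (2 * r + 1) = 2 ^ (k + 1) * (r + 1) by ring,
      Nat.mul_div_cancel_left _ (Nat.two_pow_pos _)]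
  rw [hxor _ hle, hadd_div] at hxor_div
  omega

section

variable {h : ℕ → ℕ} {s k : ℕ}

theorem xor_lt_of_lt_two_pow (hsk : 2 ^ k ∣ s) {u w : ℕ} (hu : u < 2 ^ k) (hw : w < s) :
    u ^^^ w < s :=
  Nat.lt_of_div_lt_div (c := 2 ^ k) <| by
    rw [Nat.xor_div_two_pow, Nat.div_eq_of_lt hu, Nat.zero_xor]
    exact Nat.div_lt_div_of_lt_of_dvd hsk hw

theorem le_xor_of_lt_two_pow (hsk : 2 ^ k ∣ s) {y N : ℕ} (hy : y < 2 ^ k) (hsN : s ≤ N) :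
    s ≤ y ^^^ N :=
  not_lt.mp fun hlt => by
    have := xor_lt_of_lt_two_pow hsk hy hlt
    rw [Nat.xor_xor_cancel_left] at this
    omega

theorem le_xor_of_le_apply (hA : CondA h) (hsk : 2 ^ k ∣ s) (hhs : h s < 2 ^ k) {y N : ℕ}
    (hsN : s ≤ N) (hy : y ≤ h N) : s ≤ y ^^^ N := by
  rcases lt_or_ge y (2 ^ k) with hyk | hyk
  · exact le_xor_of_lt_two_pow hsk hyk hsN
  set j := Nat.log 2 y
  have hkj : k ≤ j := Nat.le_log_of_pow_le one_lt_two hyk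
  have htop : (y ^^^ N) / 2 ^ (j + 1) = N / 2 ^ (j + 1) := by
    rw [Nat.xor_div_two_pow, Nat.div_eq_of_lt (Nat.lt_pow_succ_log_self one_lt_two y),
      Nat.zero_xor]
  rcases (Nat.div_le_div_right (c := 2 ^ (j + 1)) hsN).lt_or_eq with hlt | heq
  · exact (Nat.lt_of_div_lt_div (htop ▸ hlt)).le
  · have hjN : 2 ^ j ≤ h N :=
      (Nat.pow_log_le_self 2 ((Nat.two_pow_pos k).trans_le hyk).ne').trans hy
    have hjs : 2 ^ j ≤ h s := by
      rw [← Nat.one_le_div_iff (Nat.two_pow_pos j), hA.div_eq heq,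
        Nat.one_le_div_iff (Nat.two_pow_pos j)]
      exact hjN
    exact absurd (hhs.trans_le (Nat.pow_le_pow_right two_pos hkj)) hjs.not_gt

theorem min_apply_xor_ne (hA : CondA h) {y N w : ℕ} (hy : y ≤ h N) (hw : w < N) :
    min y (h w) ^^^ w ≠ y ^^^ N := by
  intro he
  rcases le_total y (h w) with hyw | hwy
  · rw [min_eq_left hyw] at he
    exact hw.ne (Nat.xor_right_injective he)
  · rw [min_eq_right hwy] at he
    obtain ⟨j, hag, hwj, hNj⟩ := Nat.exists_div_two_pow_eq_of_lt hw
    have hhj : h w / 2 ^ j = h N / 2 ^ j := hA.div_eq hag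
    have hyj : y / 2 ^ j = h w / 2 ^ j :=
      le_antisymm (hhj ▸ Nat.div_le_div_right hy) (Nat.div_le_div_right hwy)
    have hpar := congrArg (· / 2 ^ j % 2) he
    simp only [Nat.xor_div_two_pow_mod_two] at hpar
    omega

theorem exists_min_apply_xor_eq (hA : CondA h) {y N n j : ℕ} (hy : y ≤ h N)
    (hag : n / 2 ^ (j + 1) = (y ^^^ N) / 2 ^ (j + 1)) (hnj : n / 2 ^ j % 2 = 0)
    (hyj : y / 2 ^ j % 2 = 0) (hNj : N / 2 ^ j % 2 = 1) :
    ∃ w < N, min y (h w) ^^^ w = n := by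
  have hblock : ∀ u, u / 2 ^ j = y / 2 ^ j → (n ^^^ u) / 2 ^ (j + 1) = N / 2 ^ (j + 1) := by
    intro u hu
    rw [Nat.xor_div_two_pow, hag, Nat.xor_div_two_pow, Nat.div_two_pow_succ u, hu,
      ← Nat.div_two_pow_succ, Nat.xor_comm (y / 2 ^ (j + 1)), Nat.xor_xor_cancel_right]
  obtain ⟨u, hu, hfix⟩ := ((hA.comp_xor n).min_left y).exists_isFixedPt fun u hu => by
    rw [Nat.min_div, hA.div_eq (hblock u hu),
      min_eq_left (Nat.div_le_div_right hy)]
  refine ⟨n ^^^ u, Nat.lt_of_div_two_pow_eq (hblock u hu) ?_ hNj, ?_⟩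
  · rw [Nat.xor_div_two_pow_mod_two, hu]
    omega
  · rw [hfix.eq, Nat.xor_comm, Nat.xor_xor_cancel_right]

theorem mem_of_lt_xor (hmono : Monotone h) (hA : CondA h) (hsk : 2 ^ k ∣ s) (hhs : h s < 2 ^ k)
    {y N n : ℕ} (hy : y ≤ h N) (hsn : s ≤ n) (hn : n < y ^^^ N) :
    (∃ v < y, n = v ^^^ N) ∨ ∃ w, s ≤ w ∧ w < N ∧ n = min y (h w) ^^^ w := by
  obtain ⟨j, hag, hnj, hgj⟩ := Nat.exists_div_two_pow_eq_of_lt hn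
  rw [Nat.xor_div_two_pow_mod_two] at hgj
  rcases Nat.mod_two_eq_zero_or_one (N / 2 ^ j) with hNj | hNj
  · refine Or.inl ⟨n ^^^ N, Nat.lt_of_div_two_pow_eq (j := j) ?_ ?_ (by omega),
      (Nat.xor_xor_cancel_right n N).symm⟩
    · rw [Nat.xor_div_two_pow, hag, Nat.xor_div_two_pow, Nat.xor_xor_cancel_right]
    · rw [Nat.xor_div_two_pow_mod_two]
      omega
  · obtain ⟨w, hwN, hwn⟩ := exists_min_apply_xor_eq hA hy hag hnj (by omega) hNj
    refine Or.inr ⟨w, not_lt.mp fun hws => ?_, hwN, hwn.symm⟩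
    have := xor_lt_of_lt_two_pow hsk
      (((min_le_right y (h w)).trans (hmono hws.le)).trans_lt hhs) hws
    rw [hwn] at this
    omega

end

theorem stmt_15_general (h : ℕ → ℕ) (hmono : Monotone h) (hA : CondA h)
    (s : ℕ) (hxor : ∀ i ≤ h s, i ^^^ s = i + s)
    (y z : ℕ) (hyz : y ≤ h (z + s)) :
    y ^^^ (z + s) =
      mex ({x | ∃ v < y, x = v ^^^ (z + s)} ∪ Set.Iio s ∪
           {x | ∃ w, s ≤ w ∧ w < z + s ∧ x = min y (h w) ^^^ w}) ∧
    s ≤ y ^^^ (z + s) := by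
  obtain ⟨k, hsk, hhs⟩ := exists_two_pow_dvd_lt_of_xor_eq_add hxor
  have hle : s ≤ y ^^^ (z + s) := le_xor_of_le_apply hA hsk hhs (Nat.le_add_left s z) hyz
  refine ⟨(mex_eq_of_notMem_of_forall_lt_mem ?_ fun n hn => ?_).symm, hle⟩
  · rintro ((⟨v, hv, he⟩ | hlt) | ⟨w, -, hw, he⟩)
    · exact hv.ne' (Nat.xor_left_injective he)
    · exact (Set.mem_Iio.mp hlt).not_ge hle
    · exact min_apply_xor_ne hA hyz hw he.symm
  rcases lt_or_ge n s with hns | hsn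
  · exact Or.inl (Or.inr hns)
  rcases mem_of_lt_xor hmono hA hsk hhs hyz hsn hn with hv | hw
  exacts [Or.inl (Or.inl hv), Or.inr hw]

theorem stmt_15 (h : ℕ → ℕ) (hmono : Monotone h) (hA : CondA h)
    (s : ℕ) (hs : 1 ≤ s) (hxor : ∀ i ≤ h s, i ^^^ s = i + s)
    (y z : ℕ) (hyz : y ≤ h (z + s)) :
    y ^^^ (z + s) =
      mex ({x | ∃ v < y, x = v ^^^ (z + s)} ∪ Set.Iio s ∪
           {x | ∃ w, s ≤ w ∧ w < z + s ∧ x = min y (h w) ^^^ w}) ∧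
    s ≤ y ^^^ (z + s) :=
  stmt_15_general h hmono hA s hxor y z hyz
end

section
/- Let h : ℕ → ℕ be monotonically increasing and satisfy condition (a), and let s ≥ 1 be a natural number such that i ⊕ s = i + s for every i with 0 ≤ i ≤ h(s). Define h_s : ℕ → ℕ by h_s(z) = h(z+s). Then the Grundy function of the chocolate bar game satisfies G_{h_s}(y,z) = (y ⊕ (z+s)) − s for all y, z ∈ ℕ with y ≤ h_s(z). -/
/-!
Condition (a) makes `X ↦ h X ^^^ X` injective and maps every dyadic block `{X | X / 2 ^ n = Q}`
onto a block. Hence from `(y, Z)` with `y ≤ h Z` every value below `y ^^^ Z` is reached by a move: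
by the usual nim argument, except when the move to column `W` would be truncated by `h W < y`, in
which case the block of `W` contains a column `X` whose truncated move has the required value.
The value `y ^^^ Z` itself is never reached, so positions with `y ≤ h Z` have Grundy value
`y ^^^ Z`. The hypothesis on `s` says that `h s` lies below the lowest set bit `2 ^ a` of `s`.
Then `s ≤ y ^^^ Z` whenever `s ≤ Z`, while every move to a column `W < s` has value below `s`;
so dropping the columns below `s` shifts all Grundy values down by exactly `s`.
-/

namespace Nat

theorem xor_eq_xor_iff_xor_eq_xor {a b c d : ℕ} : a ^^^ b = c ^^^ d ↔ a ^^^ c = b ^^^ d := by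
  constructor <;> intro h <;> rw [← xor_cancel_right a _, h] <;> ac_nf <;> simp

theorem xor_lt_two_pow_iff {a b n : ℕ} : a ^^^ b < 2 ^ n ↔ a / 2 ^ n = b / 2 ^ n := by
  rw [← Nat.div_eq_zero_iff_lt (by positivity), Nat.xor_div_two_pow, xor_eq_zero_iff]

theorem div_two_pow_eq_iff_of_xor_eq {a b c d n : ℕ} (h : a ^^^ b = c ^^^ d) :
    a / 2 ^ n = b / 2 ^ n ↔ c / 2 ^ n = d / 2 ^ n := by
  rw [← xor_lt_two_pow_iff, ← xor_lt_two_pow_iff, h]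

theorem div_two_pow_eq_of_le {a b m n : ℕ} (h : a / 2 ^ m = b / 2 ^ m) (hmn : m ≤ n) :
    a / 2 ^ n = b / 2 ^ n := by
  rw [← xor_lt_two_pow_iff] at h ⊢
  exact h.trans_le (Nat.pow_le_pow_right two_pos hmn)

theorem exists_div_two_pow_ne_of_ne {a b : ℕ} (h : a ≠ b) :
    ∃ j, a / 2 ^ (j + 1) = b / 2 ^ (j + 1) ∧ a / 2 ^ j ≠ b / 2 ^ j := by
  refine ⟨Nat.log 2 (a ^^^ b), ?_, ?_⟩
  · rw [← xor_lt_two_pow_iff]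
    exact Nat.lt_pow_succ_log_self one_lt_two _
  · rw [Ne, ← xor_lt_two_pow_iff, not_lt]
    exact Nat.pow_log_le_self 2 (by rwa [Ne, xor_eq_zero_iff])

theorem lt_iff_div_two_pow_lt {a b n : ℕ} (h : a / 2 ^ n ≠ b / 2 ^ n) :
    a < b ↔ a / 2 ^ n < b / 2 ^ n :=
  ⟨fun hab => (Nat.div_le_div_right hab.le).lt_of_ne h, Nat.lt_of_div_lt_div⟩

theorem xor_lt_of_lt_of_two_pow_dvd {v w s a : ℕ} (hv : v < s) (hw : w < 2 ^ a)
    (hs : 2 ^ a ∣ s) : v ^^^ w < s := by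
  have hdiv : (v ^^^ w) / 2 ^ a = v / 2 ^ a := by
    rw [Nat.xor_div_two_pow, Nat.div_eq_of_lt hw, Nat.xor_zero]
  exact Nat.lt_of_div_lt_div (hdiv ▸ Nat.div_lt_div_of_lt_of_dvd hs hv)

theorem exists_two_pow_dvd_and_lt_of_xor_eq_add {s b : ℕ} (hs : s ≠ 0)
    (h : ∀ i ≤ b, i ^^^ s = i + s) : ∃ a, 2 ^ a ∣ s ∧ b < 2 ^ a := by
  obtain ⟨a, m, hm, rfl⟩ := Nat.exists_eq_two_pow_mul_odd hs
  refine ⟨a, dvd_mul_right _ _, lt_of_not_ge fun hb => ?_⟩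
  have hbit : (2 ^ a * m).testBit a = true := by
    rw [mul_comm, Nat.testBit_mul_two_pow]
    simpa [Nat.testBit_zero] using Nat.odd_iff.mp hm
  have hlt : 2 ^ a ^^^ 2 ^ a * m < 2 ^ a * m :=
    Nat.lt_of_testBit a (by simp [hbit]) hbit fun j hj => by simp [hj.ne]
  rw [h _ hb] at hlt
  exact hlt.not_ge (Nat.le_add_left _ _)

end Nat

theorem mex_eq_of_forall_lt_mem_s16 {S : Set ℕ} {m : ℕ} (hlt : ∀ u < m, u ∈ S) (hm : m ∉ S) :
    mex S = m :=
  le_antisymm (Nat.sInf_le hm)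
    (le_of_not_gt fun h => Nat.sInf_mem (s := {n | n ∉ S}) ⟨m, hm⟩ (hlt _ h))

namespace CondA

variable {h : ℕ → ℕ}

theorem div_two_pow_eq_s16 (hA : CondA h) {x x' n : ℕ} (hx : x / 2 ^ (n + 1) = x' / 2 ^ (n + 1)) :
    h x / 2 ^ n = h x' / 2 ^ n := by
  simpa using hA x x' (n + 1) (by omega) hx

theorem injective_xor_self (hA : CondA h) : Function.Injective fun x => h x ^^^ x := by
  intro x x' hxx'
  by_contra hne
  obtain ⟨j, hj, hj'⟩ := Nat.exists_div_two_pow_ne_of_ne hne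
  exact hj' ((Nat.div_two_pow_eq_iff_of_xor_eq (Nat.xor_eq_xor_iff_xor_eq_xor.mp hxx')).mp
    (hA.div_two_pow_eq_s16 hj))

theorem xor_self_div_two_pow_eq (hA : CondA h) {X W n : ℕ} (hX : X / 2 ^ n = W / 2 ^ n) :
    (h X ^^^ X) / 2 ^ n = (h W ^^^ W) / 2 ^ n := by
  have hXW : X / 2 ^ (n + 1) = W / 2 ^ (n + 1) := Nat.div_two_pow_eq_of_le hX (by omega)
  rw [Nat.xor_div_two_pow, Nat.xor_div_two_pow, hA.div_two_pow_eq_s16 hXW, hX]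

/-- The injective map `X ↦ h X ^^^ X` sends each block `{X | X / 2 ^ n = Q}` into a single block
of the same size, hence onto it. -/
theorem exists_xor_self_eq (hA : CondA h) {n W u : ℕ} (hu : u / 2 ^ n = (h W ^^^ W) / 2 ^ n) :
    ∃ X, X / 2 ^ n = W / 2 ^ n ∧ h X ^^^ X = u := by
  have hpos : 0 < 2 ^ n := by positivity
  have block {x Q : ℕ} : x ∈ Finset.Ico (Q * 2 ^ n) (Q * 2 ^ n + 2 ^ n) ↔ x / 2 ^ n = Q := by
    rw [Finset.mem_Ico, Nat.div_eq_iff hpos]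
    omega
  obtain ⟨X, hX, rfl⟩ := Finset.surj_on_of_inj_on_of_card_le
    (s := Finset.Ico (W / 2 ^ n * 2 ^ n) (W / 2 ^ n * 2 ^ n + 2 ^ n))
    (t := Finset.Ico ((h W ^^^ W) / 2 ^ n * 2 ^ n) ((h W ^^^ W) / 2 ^ n * 2 ^ n + 2 ^ n))
    (fun X _ => h X ^^^ X)
    (fun X hX => block.mpr (hA.xor_self_div_two_pow_eq (block.mp hX)))
    (fun X X' _ _ hXX' => hA.injective_xor_self hXX')
    (by simp) u (block.mpr hu)
  exact ⟨X, block.mp hX, rfl⟩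

theorem lt_of_xor_self_eq (hA : CondA h) {W X y : ℕ} (hW : h W < y)
    (hX : h X ^^^ X = y ^^^ W) : h X < y := by
  by_contra! hyX
  have hne : h X ≠ y := by
    rintro hXy
    rw [hXy] at hX
    have hXW : X = W := by simpa using congrArg (y ^^^ ·) hX
    subst hXW
    exact hW.ne hXy
  obtain ⟨j, hj, hj'⟩ := Nat.exists_div_two_pow_ne_of_ne hne
  have hXW := hA.div_two_pow_eq_s16
    ((Nat.div_two_pow_eq_iff_of_xor_eq (Nat.xor_eq_xor_iff_xor_eq_xor.mp hX)).mp hj)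
  have hlt := (Nat.lt_iff_div_two_pow_lt hj'.symm).mp (lt_of_le_of_ne hyX hne.symm)
  rw [hXW] at hlt
  exact (Nat.lt_of_div_lt_div hlt).not_gt hW

theorem min_xor_ne_xor_s16 (hA : CondA h) {y W Z : ℕ} (hy : y ≤ h Z) (hWZ : W < Z) :
    min y (h W) ^^^ W ≠ y ^^^ Z := by
  intro heq
  obtain ⟨j, hj, hj'⟩ := Nat.exists_div_two_pow_ne_of_ne hWZ.ne
  have hmy : min y (h W) / 2 ^ j ≠ y / 2 ^ j :=
    (Nat.div_two_pow_eq_iff_of_xor_eq (Nat.xor_eq_xor_iff_xor_eq_xor.mp heq)).not.mpr hj'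
  have hlt : min y (h W) / 2 ^ j < y / 2 ^ j :=
    (Nat.div_le_div_right (min_le_left _ _)).lt_of_ne hmy
  have hle : y / 2 ^ j ≤ h W / 2 ^ j := hA.div_two_pow_eq_s16 hj ▸ Nat.div_le_div_right hy
  rcases min_choice y (h W) with hm | hm <;> rw [hm] at hmy hlt
  · exact hmy rfl
  · exact hlt.not_ge hle

theorem exists_xor_eq_of_lt (hA : CondA h) {y Z u : ℕ} (hy : y ≤ h Z) (hu : u < y ^^^ Z) :
    (∃ v < y, v ^^^ Z = u) ∨ ∃ W < Z, min y (h W) ^^^ W = u := by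
  rcases Nat.lt_xor_cases hu with hv | hW
  · exact Or.inl ⟨u ^^^ Z, hv, xor_cancel_right u Z⟩
  right
  generalize hWdef : u ^^^ y = W at hW
  have hyW : y ^^^ W = u := by rw [← hWdef, Nat.xor_comm u y, xor_cancel_left]
  by_cases hle : y ≤ h W
  · exact ⟨W, hW, by rw [min_eq_left hle, hyW]⟩
  push Not at hle
  obtain ⟨j, hj, hj'⟩ := Nat.exists_div_two_pow_ne_of_ne hW.ne
  have hWZ := hA.div_two_pow_eq_s16 hj
  have hyj : y / 2 ^ j = h W / 2 ^ j :=
    le_antisymm (hWZ ▸ Nat.div_le_div_right hy) (Nat.div_le_div_right hle.le)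
  obtain ⟨X, hXW, hX⟩ := hA.exists_xor_self_eq (n := j) (W := W) (u := u)
    (by rw [← hyW, Nat.xor_div_two_pow, Nat.xor_div_two_pow, hyj])
  have hXy : h X < y := hA.lt_of_xor_self_eq hle (hX.trans hyW.symm)
  have hXZ : X < Z := by
    rw [Nat.lt_iff_div_two_pow_lt (hXW ▸ hj'), hXW]
    exact (Nat.lt_iff_div_two_pow_lt hj').mp hW
  exact ⟨X, hXZ, by rw [min_eq_right hXy.le, hX]⟩

variable {s a : ℕ}

theorem le_xor_of_two_pow_dvd (hA : CondA h) (hsa : 2 ^ a ∣ s) (hha : h s < 2 ^ a) {y Z : ℕ}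
    (hZ : s ≤ Z) (hy : y ≤ h Z) : s ≤ y ^^^ Z := by
  have high {n : ℕ} (hn : a ≤ n) (hZn : Z / 2 ^ (n + 1) = s / 2 ^ (n + 1)) :
      (y ^^^ Z) / 2 ^ n = Z / 2 ^ n := by
    have hs : h s / 2 ^ n = 0 :=
      Nat.div_eq_of_lt (hha.trans_le (Nat.pow_le_pow_right two_pos hn))
    have hyn : y / 2 ^ n = 0 := Nat.eq_zero_of_le_zero
      (hs ▸ hA.div_two_pow_eq_s16 hZn ▸ Nat.div_le_div_right hy)
    rw [Nat.xor_div_two_pow, hyn, Nat.zero_xor]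
  by_cases hZa : Z / 2 ^ a = s / 2 ^ a
  · have hq := high le_rfl (Nat.div_two_pow_eq_of_le hZa (by omega))
    calc s = s / 2 ^ a * 2 ^ a := (Nat.div_mul_cancel hsa).symm
      _ = (y ^^^ Z) / 2 ^ a * 2 ^ a := by rw [hq, hZa]
      _ ≤ y ^^^ Z := Nat.div_mul_le_self _ _
  · obtain ⟨j, hj, hj'⟩ := Nat.exists_div_two_pow_ne_of_ne (mt (congrArg (· / 2 ^ a)) hZa)
    have haj : a ≤ j := by
      by_contra! hja
      exact hZa (Nat.div_two_pow_eq_of_le hj hja)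
    have hsZ : s < Z := hZ.lt_of_ne (mt (congrArg (· / 2 ^ j)) hj'.symm)
    have hq := high haj hj
    refine le_of_lt ((Nat.lt_iff_div_two_pow_lt (hq ▸ hj'.symm)).mpr ?_)
    rw [hq]
    exact (Nat.lt_iff_div_two_pow_lt hj'.symm).mp hsZ

theorem exists_xor_eq_of_le_of_lt (hmono : Monotone h) (hA : CondA h) (hsa : 2 ^ a ∣ s)
    (hha : h s < 2 ^ a) {y Z u : ℕ} (hy : y ≤ h Z) (hsu : s ≤ u) (hu : u < y ^^^ Z) :
    (∃ v < y, v ^^^ Z = u) ∨ ∃ W, s ≤ W ∧ W < Z ∧ min y (h W) ^^^ W = u := by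
  refine (hA.exists_xor_eq_of_lt hy hu).imp_right fun ⟨W, hWZ, hW⟩ => ⟨W, ?_, hWZ, hW⟩
  by_contra! hWs
  have hmin : min y (h W) < 2 ^ a := (min_le_right _ _).trans_lt ((hmono hWs.le).trans_lt hha)
  have := Nat.xor_lt_of_lt_of_two_pow_dvd hWs hmin hsa
  rw [Nat.xor_comm, hW] at this
  omega

end CondA

theorem grundy_shift_eq_xor_sub {h : ℕ → ℕ} (hmono : Monotone h) (hA : CondA h) {s a : ℕ}
    (hsa : 2 ^ a ∣ s) (hha : h s < 2 ^ a) (z y : ℕ) (hyz : y ≤ h (z + s)) :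
    grundy (fun t => h (t + s)) y z = (y ^^^ (z + s)) - s := by
  induction z using Nat.strong_induction_on generalizing y with
  | _ z ihz =>
  induction y using Nat.strong_induction_on with
  | _ y ihy =>
  have hle := hA.le_xor_of_two_pow_dvd hsa hha (Nat.le_add_left s z) hyz
  rw [grundy]
  apply mex_eq_of_forall_lt_mem_s16
  · intro u hu
    rcases hA.exists_xor_eq_of_le_of_lt hmono hsa hha hyz (Nat.le_add_left s u) (by omega) with
      ⟨v, hvy, hv⟩ | ⟨W, hsW, hWZ, hW⟩
    · refine Or.inl ⟨v, hvy, ?_⟩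
      rw [ihy v hvy (by omega), hv, Nat.add_sub_cancel]
    · refine Or.inr ⟨W - s, by omega, ?_⟩
      rw [ihz _ (by omega) _ (min_le_right _ _), Nat.sub_add_cancel hsW, hW, Nat.add_sub_cancel]
  · rintro (⟨v, hvy, hv⟩ | ⟨w, hwz, hw⟩)
    · rw [ihy v hvy (by omega)] at hv
      have hvle := hA.le_xor_of_two_pow_dvd hsa hha (Nat.le_add_left s z) (hvy.le.trans hyz)
      have hvy' : v ^^^ (z + s) = y ^^^ (z + s) := by omega
      exact hvy.ne (by simpa using congrArg (· ^^^ (z + s)) hvy')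
    · rw [ihz w hwz _ (min_le_right _ _)] at hw
      have hwle := hA.le_xor_of_two_pow_dvd hsa hha (Nat.le_add_left s w) (min_le_right y _)
      exact hA.min_xor_ne_xor_s16 hyz (by omega : w + s < z + s) (by omega)

theorem stmt_16 (h : ℕ → ℕ) (hmono : Monotone h) (hA : CondA h)
    (s : ℕ) (hs : 1 ≤ s) (hxor : ∀ i ≤ h s, i ^^^ s = i + s)
    (y z : ℕ) (hyz : y ≤ h (z + s)) :
    grundy (fun t => h (t + s)) y z = (y ^^^ (z + s)) - s := by
  obtain ⟨a, hsa, hha⟩ := Nat.exists_two_pow_dvd_and_lt_of_xor_eq_add (by omega) hxor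
  exact grundy_shift_eq_xor_sub hmono hA hsa hha z y hyz
end

section
/- Let s ≥ 1 be a natural number and let g : ℕ → ℕ be monotonically increasing such that its Grundy function satisfies G_g(y,z) = (y ⊕ (z+s)) − s for all y, z ∈ ℕ with y ≤ g(z). Then i ⊕ s = i + s for every i with 0 ≤ i ≤ g(0). -/
lemma mex_Iio (y : ℕ) : mex {x | x < y} = y := by
  unfold mex
  have : {n | n ∉ {x | x < y}} = Set.Ici y := by
    ext n; simp [Set.mem_Ici]
  rw [this, csInf_Ici]

lemma grundy_zero (f : ℕ → ℕ) : ∀ y, grundy f y 0 = y := by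
  intro y
  induction y using Nat.strong_induction_on with
  | _ y ih =>
    rw [grundy]
    have h1 : {x | ∃ w, ∃ _ : w < 0, x = grundy f (min y (f w)) w} = (∅ : Set ℕ) := by
      ext x; simp
    have h2 : {x | ∃ v, ∃ _ : v < y, x = grundy f v 0} = {x | x < y} := by
      ext x
      constructor
      · rintro ⟨v, hv, rfl⟩; rw [ih v hv]; exact hv
      · intro hx; exact ⟨x, hx, (ih x hx).symm⟩
    rw [h1, h2, Set.union_empty, mex_Iio]

theorem stmt_17 (s : ℕ) (hs : 1 ≤ s) (g : ℕ → ℕ) (hmono : Monotone g)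
    (hG : ∀ y z : ℕ, y ≤ g z → grundy g y z = (y ^^^ (z + s)) - s) :
    ∀ i ≤ g 0, i ^^^ s = i + s := by
  intro i hi
  rcases Nat.eq_zero_or_pos i with rfl | hpos
  · simp
  · have h := hG i 0 hi
    rw [grundy_zero, Nat.zero_add] at h
    omega
end
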